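/- arXiv:1911.04569 — 8 statements merged into one kernel-verified Lean document; each statement's English description precedes it below -/
import Mathlib

section
/- Let σ > 0, κ ≥ 0, and let z, w ∈ ℂ have nonpositive real parts. Then the complex Riccati differential equation ψ'(t) = (σ²/2)ψ(t)² − κψ(t) + w with initial condition ψ(0) = z has a unique solution ψ defined on the whole half-line [0,∞) (i.e., the maximal solution does not explode in finite time), and this solution satisfies Re ψ(t) ≤ 0 for all t ≥ 0. -/
/-!
Write `a = σ²/2`. With `ψ = x + iy` one has `x' = a (x² - y²) - κ x + Re w ≤ (a x - κ) x`, so `x`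
can never become positive. Consequently `d/dt ‖ψ‖² = 2 ⟪ψ, ψ'⟫ ≤ (1 + 2|κ|) ‖ψ‖² + ‖w‖²`, and by
Grönwall every solution is bounded on bounded intervals.

For existence, let `c` be a root of `a c² - κ c + w`; the substitution `ψ = c + 1/v` turns the
equation into the linear one `v' = (κ - 2ac) v - a`, which is solved explicitly. If `v` had a zero
on `[0, ∞)`, then `1/v = ψ - c` would blow up at the first one, contradicting the bound above.
Uniqueness follows since the vector field is locally Lipschitz and solutions stay in compact sets.
-/

open Set Filter Topology Complex

theorem nonpos_of_deriv_right_le_mul_of_pos {f f' : ℝ → ℝ} {a b K : ℝ}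
    (hf : ContinuousOn f (Icc a b)) (hf' : ∀ x ∈ Ico a b, HasDerivWithinAt f (f' x) (Ici x) x)
    (ha : f a ≤ 0) (bound : ∀ x ∈ Ico a b, 0 < f x → f' x ≤ K * f x) :
    ∀ x ∈ Icc a b, f x ≤ 0 := by
  intro x hx
  refine le_of_forall_pos_le_add fun ε hε => ?_
  set B : ℝ → ℝ := fun t => ε * Real.exp ((K + 1) * (t - x))
  have hB : ∀ t, HasDerivAt B ((K + 1) * B t) t := fun t => by
    refine ((((hasDerivAt_id t).sub_const x).const_mul (K + 1)).exp.const_mul ε).congr_deriv ?_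
    simp only [B, id]
    ring
  have hBpos : ∀ t, 0 < B t := fun t => by positivity
  have hfB := image_le_of_deriv_right_lt_deriv_boundary hf hf' (ha.trans (hBpos a).le) hB
    (fun t ht hft => (bound t ht (hft ▸ hBpos t)).trans_lt (by rw [hft]; linarith [hBpos t]))
    hx
  simpa [B] using hfB

theorem Continuous.exists_first_zero {M : Type*} [TopologicalSpace M] [T1Space M] [Zero M]
    {f : ℝ → M} (hf : Continuous f) {a b : ℝ} (ha : f a ≠ 0) (hab : a ≤ b) (hb : f b = 0) :
    ∃ c ∈ Ioc a b, f c = 0 ∧ ∀ t ∈ Ico a c, f t ≠ 0 := by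
  set S := Icc a b ∩ f ⁻¹' {0}
  have hS : IsCompact S := isCompact_Icc.inter_right (isClosed_singleton.preimage hf)
  obtain ⟨⟨hac, hcb⟩, hc⟩ := hS.sInf_mem ⟨b, ⟨hab, le_rfl⟩, hb⟩
  refine ⟨sInf S, ⟨hac.lt_of_ne ?_, hcb⟩, hc, fun t ht hft => ?_⟩
  · rintro h
    exact ha (h ▸ hc)
  · exact (csInf_le hS.bddBelow ⟨⟨ht.1, ht.2.le.trans hcb⟩, hft⟩).not_gt ht.2

theorem ContinuousAt.exists_lt_norm_inv_of_eq_zero {𝕜 : Type*} [NormedDivisionRing 𝕜]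
    {v : ℝ → 𝕜} {a t₀ : ℝ} (hv : ContinuousAt v t₀) (ht₀ : a < t₀) (hvt₀ : v t₀ = 0)
    (hne : ∀ s ∈ Ico a t₀, v s ≠ 0) (C : ℝ) : ∃ s ∈ Ico a t₀, C < ‖(v s)⁻¹‖ := by
  have hv_ne : ∀ᶠ s in 𝓝[<] t₀, v s ∈ ({0}ᶜ : Set 𝕜) :=
    mem_of_superset (Ioo_mem_nhdsLT ht₀) fun s hs => hne s (Ioo_subset_Ico_self hs)
  have hblow : Tendsto (fun s => ‖(v s)⁻¹‖) (𝓝[<] t₀) atTop :=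
    tendsto_norm_inv_nhdsNE_zero_atTop.comp (tendsto_nhdsWithin_iff.2
      ⟨hvt₀ ▸ hv.tendsto.mono_left nhdsWithin_le_nhds, hv_ne⟩)
  obtain ⟨s, hs, hs'⟩ := ((hblow.eventually_gt_atTop C).and (Ioo_mem_nhdsLT ht₀)).exists
  exact ⟨s, Ioo_subset_Ico_self hs', hs⟩

section

variable {E : Type*} [NormedAddCommGroup E] [NormedSpace ℝ E] {f f' : ℝ → E} {a b : ℝ}

theorem continuousOn_Icc_of_hasDerivWithinAt_Ici
    (hf : ∀ t ∈ Ici a, HasDerivWithinAt f (f' t) (Ici a) t) : ContinuousOn f (Icc a b) :=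
  fun t ht => (hf t ht.1).continuousWithinAt.mono Icc_subset_Ici_self

theorem hasDerivWithinAt_Ici_self_of_hasDerivWithinAt_Ici
    (hf : ∀ t ∈ Ici a, HasDerivWithinAt f (f' t) (Ici a) t) :
    ∀ t ∈ Ico a b, HasDerivWithinAt f (f' t) (Ici t) t :=
  fun t ht => (hf t ht.1).mono (Ici_subset_Ici.2 ht.1)

theorem ODE_solution_unique_Ici_of_locallyLipschitz {v : E → E} (hv : LocallyLipschitz v)
    {g : ℝ → E} (hf : ∀ t ∈ Ici a, HasDerivWithinAt f (v (f t)) (Ici a) t)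
    (hg : ∀ t ∈ Ici a, HasDerivWithinAt g (v (g t)) (Ici a) t) (ha : f a = g a) :
    EqOn f g (Ici a) := by
  intro t ht
  have hfc : ContinuousOn f (Icc a t) := continuousOn_Icc_of_hasDerivWithinAt_Ici hf
  have hgc : ContinuousOn g (Icc a t) := continuousOn_Icc_of_hasDerivWithinAt_Ici hg
  obtain ⟨K, hK⟩ := hv.locallyLipschitzOn.exists_lipschitzOnWith_of_compact
    ((isCompact_Icc.image_of_continuousOn hfc).union (isCompact_Icc.image_of_continuousOn hgc))
  exact ODE_solution_unique_of_mem_Icc_right (fun _ _ => hK)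
    hfc (hasDerivWithinAt_Ici_self_of_hasDerivWithinAt_Ici hf)
    (fun s hs => Or.inl (mem_image_of_mem f (Ico_subset_Icc_self hs)))
    hgc (hasDerivWithinAt_Ici_self_of_hasDerivWithinAt_Ici hg)
    (fun s hs => Or.inr (mem_image_of_mem g (Ico_subset_Icc_self hs))) ha ⟨ht, le_rfl⟩

end

theorem exists_hasDerivAt_linear_ode (p q v₀ : ℂ) :
    ∃ v : ℝ → ℂ, v 0 = v₀ ∧ ∀ t : ℝ, HasDerivAt v (p * v t + q) t := by
  rcases eq_or_ne p 0 with rfl | hp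
  · refine ⟨fun t => v₀ + q * t, by simp, fun t => ?_⟩
    simpa using ((hasDerivAt_id t).ofReal_comp.const_mul q).const_add v₀
  · refine ⟨fun t => (v₀ + q / p) * exp (p * t) - q / p, by simp, fun t => ?_⟩
    refine (((((hasDerivAt_id t).ofReal_comp.const_mul p).cexp).const_mul
      (v₀ + q / p)).sub_const (q / p)).congr_deriv ?_
    simp only [id, ofReal_one]
    field_simp
    ring

def riccati (a b w u : ℂ) : ℂ := a * u ^ 2 - b * u + w

theorem contDiff_riccati (a b w : ℂ) : ContDiff ℂ 1 (riccati a b w) := by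
  unfold riccati
  fun_prop

theorem exists_riccati_eq_zero {a : ℂ} (ha : a ≠ 0) (b w : ℂ) : ∃ c, riccati a b w c = 0 := by
  obtain ⟨s, hs⟩ := IsAlgClosed.exists_eq_mul_self (discrim a (-b) w)
  obtain ⟨c, hc⟩ := exists_quadratic_eq_zero ha ⟨s, hs⟩
  exact ⟨c, by rw [riccati]; linear_combination hc⟩

theorem hasDerivAt_riccati_add_inv {a b w c : ℂ} (hc : riccati a b w c = 0) {v : ℝ → ℂ}
    {t : ℝ} (hv : HasDerivAt v ((b - 2 * a * c) * v t - a) t) (hvt : v t ≠ 0) :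
    HasDerivAt (fun s => c + (v s)⁻¹) (riccati a b w (c + (v t)⁻¹)) t := by
  refine (((hasDerivAt_inv hvt).comp t hv).const_add c).congr_deriv ?_
  rw [riccati] at hc ⊢
  field_simp
  linear_combination -(v t ^ 2) * hc

theorem re_riccati_le {a κ R : ℝ} {w u : ℂ} (ha : 0 ≤ a) (hw : w.re ≤ 0) (hu₀ : 0 ≤ u.re)
    (hu : u.re ≤ R) : (riccati a κ w u).re ≤ (a * R + |κ|) * u.re := by
  simp only [riccati, add_re, sub_re, mul_re, ofReal_re, ofReal_im, pow_two]
  nlinarith [mul_nonneg ha (mul_self_nonneg u.im),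
    mul_nonneg (mul_nonneg ha hu₀) (sub_nonneg.2 hu),
    mul_le_mul_of_nonneg_right (neg_abs_le κ) hu₀]

theorem two_inner_riccati_le {a κ : ℝ} {w u : ℂ} (ha : 0 ≤ a) (hu : u.re ≤ 0) :
    2 * inner ℝ u (riccati a κ w u) ≤ (1 + 2 * |κ|) * ‖u‖ ^ 2 + ‖w‖ ^ 2 := by
  rw [Complex.sq_norm, Complex.sq_norm, Complex.inner]
  simp only [riccati, normSq_apply, add_re, sub_re, mul_re, conj_re, conj_im, ofReal_re,
    ofReal_im, add_im, sub_im, mul_im, zero_mul, sub_zero, add_zero, pow_two]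
  nlinarith [mul_nonneg (mul_nonneg ha (add_nonneg (mul_self_nonneg u.re) (mul_self_nonneg u.im)))
    (neg_nonneg.2 hu), mul_le_mul_of_nonneg_right (neg_abs_le κ)
      (add_nonneg (mul_self_nonneg u.re) (mul_self_nonneg u.im)),
    mul_self_nonneg (u.re - w.re), mul_self_nonneg (u.im - w.im)]

section

variable {a κ s : ℝ} {w : ℂ} {ψ : ℝ → ℂ}

theorem re_nonpos_of_riccati (ha : 0 ≤ a) (hw : w.re ≤ 0) (hψ : ContinuousOn ψ (Icc 0 s))
    (hψ' : ∀ t ∈ Ico 0 s, HasDerivWithinAt ψ (riccati a κ w (ψ t)) (Ici t) t)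
    (h0 : (ψ 0).re ≤ 0) : ∀ t ∈ Icc 0 s, (ψ t).re ≤ 0 := by
  have hre : ContinuousOn (fun t => (ψ t).re) (Icc 0 s) := continuous_re.comp_continuousOn hψ
  obtain ⟨R, hR⟩ := (isCompact_Icc.image_of_continuousOn hre).bddAbove
  exact nonpos_of_deriv_right_le_mul_of_pos hre
    (fun t ht => reCLM.hasFDerivAt.comp_hasDerivWithinAt t (hψ' t ht)) h0
    fun t ht hpos =>
      re_riccati_le ha hw hpos.le (hR (mem_image_of_mem _ (Ico_subset_Icc_self ht)))

theorem sq_norm_le_gronwallBound_of_riccati (ha : 0 ≤ a) (hw : w.re ≤ 0)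
    (hψ : ContinuousOn ψ (Icc 0 s))
    (hψ' : ∀ t ∈ Ico 0 s, HasDerivWithinAt ψ (riccati a κ w (ψ t)) (Ici t) t)
    (h0 : (ψ 0).re ≤ 0) :
    ∀ t ∈ Icc 0 s, ‖ψ t‖ ^ 2 ≤ gronwallBound (‖ψ 0‖ ^ 2) (1 + 2 * |κ|) (‖w‖ ^ 2) t := by
  have hsign := re_nonpos_of_riccati ha hw hψ hψ' h0
  intro t ht
  simpa using le_gronwallBound_of_liminf_deriv_right_le (f := fun t => ‖ψ t‖ ^ 2)
    (hψ.norm.pow 2) (fun t ht _ hr => (hψ' t ht).norm_sq.liminf_right_slope_le hr) le_rfl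
    (fun t ht => two_inner_riccati_le ha (hsign t (Ico_subset_Icc_self ht))) t ht

end

theorem riccati_linearization_ne_zero {a κ : ℝ} {w c : ℂ} (ha : 0 ≤ a) (hw : w.re ≤ 0)
    (hc : riccati a κ w c = 0) {v : ℝ → ℂ}
    (hv : ∀ t, HasDerivAt v ((κ - 2 * a * c) * v t - a) t) (hv0 : v 0 ≠ 0)
    (hre : (c + (v 0)⁻¹).re ≤ 0) : ∀ t ∈ Ici (0 : ℝ), v t ≠ 0 := by
  intro t ht hvt
  obtain ⟨t₀, ⟨ht₀, -⟩, hvt₀, hne⟩ :=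
    (continuous_iff_continuousAt.2 fun t => (hv t).continuousAt).exists_first_zero hv0 ht hvt
  set ψ : ℝ → ℂ := fun s => c + (v s)⁻¹
  set G := gronwallBound (‖ψ 0‖ ^ 2) (1 + 2 * |κ|) (‖w‖ ^ 2)
  have hψ : ∀ s ∈ Ico 0 t₀, HasDerivAt ψ (riccati a κ w (ψ s)) s := fun s hs =>
    hasDerivAt_riccati_add_inv hc (hv s) (hne s hs)
  obtain ⟨s, hs, hlt⟩ :=
    (hv t₀).continuousAt.exists_lt_norm_inv_of_eq_zero ht₀ hvt₀ hne (√(G t₀) + ‖c‖)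
  have hsub : Icc 0 s ⊆ Ico 0 t₀ := Icc_subset_Ico_right hs.2
  have hψs := sq_norm_le_gronwallBound_of_riccati ha hw
    (fun r hr => (hψ r (hsub hr)).continuousAt.continuousWithinAt)
    (fun r hr => (hψ r (hsub (Ico_subset_Icc_self hr))).hasDerivWithinAt) hre s ⟨hs.1, le_rfl⟩
  have hG : ‖ψ s‖ ≤ √(G t₀) := Real.le_sqrt_of_sq_le
    (hψs.trans (gronwallBound_mono (by positivity) (by positivity) (by positivity) hs.2.le))
  refine hlt.not_ge ?_
  calc ‖(v s)⁻¹‖ = ‖ψ s - c‖ := by simp [ψ]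
    _ ≤ ‖ψ s‖ + ‖c‖ := norm_sub_le _ _
    _ ≤ √(G t₀) + ‖c‖ := by gcongr

theorem exists_riccati_solution {a κ : ℝ} {w z : ℂ} (ha : 0 < a) (hw : w.re ≤ 0)
    (hz : z.re ≤ 0) :
    ∃ ψ : ℝ → ℂ, ψ 0 = z ∧ ∀ t ∈ Ici (0 : ℝ), HasDerivAt ψ (riccati a κ w (ψ t)) t := by
  obtain ⟨c, hc⟩ := exists_riccati_eq_zero (ofReal_ne_zero.2 ha.ne') κ w
  rcases eq_or_ne z c with rfl | hzc
  · exact ⟨fun _ => z, rfl, fun t _ => hc ▸ hasDerivAt_const t z⟩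
  obtain ⟨v, hv0, hv⟩ := exists_hasDerivAt_linear_ode (κ - 2 * a * c) (-a) (z - c)⁻¹
  have hψ0 : c + (v 0)⁻¹ = z := by simp [hv0]
  have hv' : ∀ t, HasDerivAt v ((κ - 2 * a * c) * v t - a) t := fun t =>
    (hv t).congr_deriv (sub_eq_add_neg _ _).symm
  refine ⟨fun t => c + (v t)⁻¹, hψ0, fun t ht => hasDerivAt_riccati_add_inv hc (hv' t) ?_⟩
  exact riccati_linearization_ne_zero ha.le hw hc hv' (by simpa [hv0] using sub_ne_zero.2 hzc)
    (hψ0 ▸ hz) t ht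

theorem stmt_5_general (σ κ : ℝ) (hσ : 0 < σ) (z w : ℂ)
    (hz : z.re ≤ 0) (hw : w.re ≤ 0) :
    ∃ ψ : ℝ → ℂ, ψ 0 = z ∧
      (∀ t ∈ Set.Ici (0 : ℝ),
        HasDerivWithinAt ψ (((σ ^ 2 / 2 : ℝ) : ℂ) * ψ t ^ 2 - (κ : ℂ) * ψ t + w)
          (Set.Ici 0) t) ∧
      (∀ t ∈ Set.Ici (0 : ℝ), (ψ t).re ≤ 0) ∧
      ∀ φ : ℝ → ℂ, φ 0 = z →
        (∀ t ∈ Set.Ici (0 : ℝ),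
          HasDerivWithinAt φ (((σ ^ 2 / 2 : ℝ) : ℂ) * φ t ^ 2 - (κ : ℂ) * φ t + w)
            (Set.Ici 0) t) →
        Set.EqOn φ ψ (Set.Ici 0) := by
  obtain ⟨ψ, hψ0, hψ⟩ :=
    exists_riccati_solution (a := σ ^ 2 / 2) (κ := κ) (by positivity) hw hz
  have hψ' : ∀ t ∈ Ici (0 : ℝ),
      HasDerivWithinAt ψ (riccati (σ ^ 2 / 2 : ℝ) κ w (ψ t)) (Ici 0) t :=
    fun t ht => (hψ t ht).hasDerivWithinAt
  refine ⟨ψ, hψ0, hψ', fun t ht => ?_, fun φ hφ0 hφ => ?_⟩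
  · exact re_nonpos_of_riccati (by positivity) hw (continuousOn_Icc_of_hasDerivWithinAt_Ici hψ')
      (hasDerivWithinAt_Ici_self_of_hasDerivWithinAt_Ici hψ') (hψ0 ▸ hz) t ⟨ht, le_rfl⟩
  · exact ODE_solution_unique_Ici_of_locallyLipschitz (contDiff_riccati _ _ _).locallyLipschitz
      hφ hψ' (hφ0.trans hψ0.symm)

theorem stmt_5 (σ κ : ℝ) (hσ : 0 < σ) (hκ : 0 ≤ κ) (z w : ℂ)
    (hz : z.re ≤ 0) (hw : w.re ≤ 0) :
    ∃ ψ : ℝ → ℂ, ψ 0 = z ∧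
      (∀ t ∈ Set.Ici (0 : ℝ),
        HasDerivWithinAt ψ (((σ ^ 2 / 2 : ℝ) : ℂ) * ψ t ^ 2 - (κ : ℂ) * ψ t + w)
          (Set.Ici 0) t) ∧
      (∀ t ∈ Set.Ici (0 : ℝ), (ψ t).re ≤ 0) ∧
      ∀ φ : ℝ → ℂ, φ 0 = z →
        (∀ t ∈ Set.Ici (0 : ℝ),
          HasDerivWithinAt φ (((σ ^ 2 / 2 : ℝ) : ℂ) * φ t ^ 2 - (κ : ℂ) * φ t + w)
            (Set.Ici 0) t) →
        Set.EqOn φ ψ (Set.Ici 0) :=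
  stmt_5_general σ κ hσ z w hz hw
end

section
/- Let σ > 0, κ ≥ 0 and let λ₁, λ₂ ∈ ℝ satisfy (σ²/2)λ₁² − κλ₁ + λ₂ ≤ 0. Then the real Riccati differential equation ψ'(t) = (σ²/2)ψ(t)² − κψ(t) + λ₂ with ψ(0) = λ₁ has a unique solution ψ defined on all of [0,∞); moreover ψ is nonincreasing and satisfies κ/σ² − √((κ/σ²)² − 2λ₂/σ²) ≤ ψ(t) ≤ λ₁ for every t ≥ 0 (note that (κ/σ²)² − 2λ₂/σ² ≥ 0 under the stated hypothesis). -/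
/-!
Put `D = (κ/σ²)² - 2λ₂/σ² = (κ² - 2σ²λ₂)/σ⁴` and `r₋, r₊ = κ/σ² ∓ √D`. The hypothesis forces `D ≥ 0`,
the right-hand side factors as `(σ²/2)(x - r₋)(x - r₊)`, and the hypothesis says `λ₁ ∈ [r₋, r₊]`.
If `λ₁` is a root the solution is constant. Otherwise `w = (ψ - r₋)/(r₊ - ψ)` turns the equation
into the linear one `w' = -(σ²/2)(r₊ - r₋) w`, so `ψ = (r₋ + r₊ w)/(1 + w)` with `w` a positive
exponential is a global solution staying in `(r₋, r₊)`, where the right-hand side is negative;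
hence `ψ` is nonincreasing. Uniqueness holds because a polynomial vector field is Lipschitz on the
compact set swept out by two solutions over `[0, t]`.
-/

open Set

theorem eqOn_Ici_of_hasDerivWithinAt {E : Type*} [NormedAddCommGroup E] [NormedSpace ℝ E]
    {v : E → E} (hv : LocallyLipschitz v) {f g : ℝ → E} {a : ℝ}
    (hf : ∀ t ∈ Ici a, HasDerivWithinAt f (v (f t)) (Ici a) t)
    (hg : ∀ t ∈ Ici a, HasDerivWithinAt g (v (g t)) (Ici a) t)
    (ha : f a = g a) : EqOn f g (Ici a) := by
  intro t ht
  have hcont {h : ℝ → E} (hh : ∀ t ∈ Ici a, HasDerivWithinAt h (v (h t)) (Ici a) t) :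
      ContinuousOn h (Icc a t) :=
    fun u hu => (hh u hu.1).continuousWithinAt.mono Icc_subset_Ici_self
  have hderiv {h : ℝ → E} (hh : ∀ t ∈ Ici a, HasDerivWithinAt h (v (h t)) (Ici a) t) :
      ∀ u ∈ Ico a t, HasDerivWithinAt h (v (h u)) (Ici u) u :=
    fun u hu => (hh u hu.1).mono (Ici_subset_Ici.mpr hu.1)
  obtain ⟨L, hL⟩ := hv.locallyLipschitzOn.exists_lipschitzOnWith_of_compact
    ((isCompact_Icc.image_of_continuousOn (hcont hf)).union
      (isCompact_Icc.image_of_continuousOn (hcont hg)))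
  exact ODE_solution_unique_of_mem_Icc_right (v := fun _ => v) (fun _ _ => hL)
    (hcont hf) (hderiv hf) (fun u hu => Or.inl ⟨u, Ico_subset_Icc_self hu, rfl⟩)
    (hcont hg) (hderiv hg) (fun u hu => Or.inr ⟨u, Ico_subset_Icc_self hu, rfl⟩) ha ⟨ht, le_rfl⟩

section MulSubMulSub

variable (a : ℝ) {r₁ r₂ x₀ : ℝ}

theorem exists_hasDerivAt_mul_sub_mul_sub_of_mem_Ioo (hx₀ : x₀ ∈ Ioo r₁ r₂) :
    ∃ ψ : ℝ → ℝ, ψ 0 = x₀ ∧ (∀ t, HasDerivAt ψ (a * (ψ t - r₁) * (ψ t - r₂)) t) ∧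
      ∀ t, ψ t ∈ Ioo r₁ r₂ := by
  obtain ⟨h₁, h₂⟩ := hx₀
  set γ := a * (r₂ - r₁)
  set w : ℝ → ℝ := fun t => (x₀ - r₁) / (r₂ - x₀) * Real.exp (-γ * t)
  have hw_pos (t : ℝ) : 0 < w t :=
    mul_pos (div_pos (sub_pos.2 h₁) (sub_pos.2 h₂)) (Real.exp_pos _)
  have hw (t : ℝ) : HasDerivAt w (-γ * w t) t := by
    refine ((((hasDerivAt_id t).const_mul (-γ)).exp).const_mul _).congr_deriv ?_
    simp only [w, id, mul_one]
    ring
  have hden (t : ℝ) : 1 + w t ≠ 0 := by linarith [hw_pos t]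
  refine ⟨fun t => (r₁ + r₂ * w t) / (1 + w t), ?_, fun t => ?_, fun t => ⟨?_, ?_⟩⟩
  · have : r₂ - x₀ ≠ 0 := by linarith
    change (r₁ + r₂ * w 0) / (1 + w 0) = x₀
    rw [div_eq_iff (hden 0)]
    simp only [w, mul_zero, Real.exp_zero, mul_one]
    field_simp
    ring
  · refine ((((hw t).const_mul r₂).const_add r₁).div ((hw t).const_add 1) (hden t)).congr_deriv ?_
    have := hden t
    field_simp
    ring
  · rw [lt_div_iff₀ (by linarith [hw_pos t])]
    nlinarith [hw_pos t]
  · rw [div_lt_iff₀ (by linarith [hw_pos t])]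
    nlinarith [hw_pos t]

theorem exists_hasDerivAt_mul_sub_mul_sub (hx₀ : x₀ ∈ Icc r₁ r₂) :
    ∃ ψ : ℝ → ℝ, ψ 0 = x₀ ∧ (∀ t, HasDerivAt ψ (a * (ψ t - r₁) * (ψ t - r₂)) t) ∧
      ∀ t, ψ t ∈ Icc r₁ r₂ := by
  rcases eq_endpoints_or_mem_Ioo_of_mem_Icc hx₀ with rfl | rfl | hx₀
  · exact ⟨fun _ => x₀, rfl, fun t => by simpa using hasDerivAt_const t x₀, fun _ => hx₀⟩
  · exact ⟨fun _ => x₀, rfl, fun t => by simpa using hasDerivAt_const t x₀, fun _ => hx₀⟩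
  · obtain ⟨ψ, hψ0, hψ, hψmem⟩ := exists_hasDerivAt_mul_sub_mul_sub_of_mem_Ioo a hx₀
    exact ⟨ψ, hψ0, hψ, fun t => Ioo_subset_Icc_self (hψmem t)⟩

variable {a}

theorem antitone_of_hasDerivAt_mul_sub_mul_sub (ha : 0 ≤ a) {ψ : ℝ → ℝ}
    (hψ : ∀ t, HasDerivAt ψ (a * (ψ t - r₁) * (ψ t - r₂)) t) (hmem : ∀ t, ψ t ∈ Icc r₁ r₂) :
    Antitone ψ :=
  antitone_of_hasDerivAt_nonpos hψ fun t =>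
    mul_nonpos_of_nonneg_of_nonpos (mul_nonneg ha (sub_nonneg.2 (hmem t).1))
      (sub_nonpos.2 (hmem t).2)

end MulSubMulSub

theorem stmt_6_general (σ κ lam1 lam2 : ℝ) (hσ : 0 < σ)
    (hsign : σ ^ 2 / 2 * lam1 ^ 2 - κ * lam1 + lam2 ≤ 0) :
    0 ≤ (κ / σ ^ 2) ^ 2 - 2 * lam2 / σ ^ 2 ∧
    ∃ ψ : ℝ → ℝ, ψ 0 = lam1 ∧
      (∀ t ∈ Set.Ici (0 : ℝ),
        HasDerivWithinAt ψ (σ ^ 2 / 2 * ψ t ^ 2 - κ * ψ t + lam2) (Set.Ici 0) t) ∧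
      AntitoneOn ψ (Set.Ici 0) ∧
      (∀ t ∈ Set.Ici (0 : ℝ),
        κ / σ ^ 2 - Real.sqrt ((κ / σ ^ 2) ^ 2 - 2 * lam2 / σ ^ 2) ≤ ψ t ∧ ψ t ≤ lam1) ∧
      ∀ φ : ℝ → ℝ, φ 0 = lam1 →
        (∀ t ∈ Set.Ici (0 : ℝ),
          HasDerivWithinAt φ (σ ^ 2 / 2 * φ t ^ 2 - κ * φ t + lam2) (Set.Ici 0) t) →
        Set.EqOn φ ψ (Set.Ici 0) := by
  set D := (κ / σ ^ 2) ^ 2 - 2 * lam2 / σ ^ 2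
  have hDσ : σ ^ 4 * D = κ ^ 2 - 2 * σ ^ 2 * lam2 := by
    simp only [D]
    field_simp
  have hD : 0 ≤ D := by
    have : 0 ≤ σ ^ 4 * D := by
      rw [hDσ]
      nlinarith [sq_nonneg (σ ^ 2 * lam1 - κ), mul_nonpos_of_nonneg_of_nonpos (sq_nonneg σ) hsign]
    exact nonneg_of_mul_nonneg_right this (by positivity)
  set r₁ := κ / σ ^ 2 - √D
  set r₂ := κ / σ ^ 2 + √D
  have hfactor (x : ℝ) : σ ^ 2 / 2 * x ^ 2 - κ * x + lam2 = σ ^ 2 / 2 * (x - r₁) * (x - r₂) := by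
    simp only [r₁, r₂]
    field_simp
    linear_combination σ ^ 4 * Real.sq_sqrt hD + hDσ
  have hlam1 : lam1 ∈ Icc r₁ r₂ := by
    rw [hfactor, mul_assoc] at hsign
    have hprod := nonpos_of_mul_nonpos_right hsign (by positivity)
    have : r₁ ≤ r₂ := by simp only [r₁, r₂]; linarith [Real.sqrt_nonneg D]
    constructor <;> nlinarith
  obtain ⟨ψ, hψ0, hψ, hψmem⟩ := exists_hasDerivAt_mul_sub_mul_sub (σ ^ 2 / 2) hlam1
  have hanti := antitone_of_hasDerivAt_mul_sub_mul_sub (by positivity) hψ hψmem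
  simp only [← hfactor] at hψ
  have hv : LocallyLipschitz fun x : ℝ => σ ^ 2 / 2 * x ^ 2 - κ * x + lam2 :=
    (by fun_prop : ContDiff ℝ 1 fun x : ℝ => σ ^ 2 / 2 * x ^ 2 - κ * x + lam2).locallyLipschitz
  exact ⟨hD, ψ, hψ0, fun t _ => (hψ t).hasDerivWithinAt, hanti.antitoneOn _,
    fun t ht => ⟨(hψmem t).1, hψ0 ▸ hanti ht⟩, fun φ hφ0 hφ =>
      eqOn_Ici_of_hasDerivWithinAt hv hφ (fun t _ => (hψ t).hasDerivWithinAt) (hφ0.trans hψ0.symm)⟩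

theorem stmt_6 (σ κ lam1 lam2 : ℝ) (hσ : 0 < σ) (hκ : 0 ≤ κ)
    (hsign : σ ^ 2 / 2 * lam1 ^ 2 - κ * lam1 + lam2 ≤ 0) :
    0 ≤ (κ / σ ^ 2) ^ 2 - 2 * lam2 / σ ^ 2 ∧
    ∃ ψ : ℝ → ℝ, ψ 0 = lam1 ∧
      (∀ t ∈ Set.Ici (0 : ℝ),
        HasDerivWithinAt ψ (σ ^ 2 / 2 * ψ t ^ 2 - κ * ψ t + lam2) (Set.Ici 0) t) ∧
      AntitoneOn ψ (Set.Ici 0) ∧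
      (∀ t ∈ Set.Ici (0 : ℝ),
        κ / σ ^ 2 - Real.sqrt ((κ / σ ^ 2) ^ 2 - 2 * lam2 / σ ^ 2) ≤ ψ t ∧ ψ t ≤ lam1) ∧
      ∀ φ : ℝ → ℝ, φ 0 = lam1 →
        (∀ t ∈ Set.Ici (0 : ℝ),
          HasDerivWithinAt φ (σ ^ 2 / 2 * φ t ^ 2 - κ * φ t + lam2) (Set.Ici 0) t) →
        Set.EqOn φ ψ (Set.Ici 0) :=
  stmt_6_general σ κ lam1 lam2 hσ hsign
end

section
/- There exists a constant C_β > 0, depending only on β, such that for every t > 0, y₀ > 0 and y > 0: p_t(y₀,y) ≤ (C_β / L_t^{β+1/2}) e^{−(√y − √{y_t})²/(2L_t)} y^{β−1} ( L_t^{1/2} + (y·y_t)^{1/4} ). -/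
noncomputable section

/-- The modified Bessel function of the first kind,
`I_ν(x) = (x/2)^ν ∑_{n≥0} (x/2)^{2n} / (n! Γ(n+ν+1))`. -/
def besselI (ν x : ℝ) : ℝ :=
  (x / 2) ^ ν *
    ∑' n : ℕ, (x / 2) ^ (2 * n) / ((n.factorial : ℝ) * Real.Gamma ((n : ℝ) + ν + 1))

/-- `y_t = y₀ e^{-κ t}`. -/
def cirYt (κ t y₀ : ℝ) : ℝ := y₀ * Real.exp (-(κ * t))

/-- `L_t = (σ²/(4κ)) (1 - e^{-κ t})`. -/
def cirLt (κ σ t : ℝ) : ℝ := σ ^ 2 / (4 * κ) * (1 - Real.exp (-(κ * t)))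

/-- The transition density of the CIR process with parameters `κ, θ, σ`:
`p_t(y₀,y) = (e^{-y_t/(2L_t)}/(2 y_t^{ν/2} L_t)) e^{-y/(2L_t)} y^{ν/2} I_ν(√(y y_t)/L_t)`,
where `ν = 2κθ/σ² - 1`. -/
def cirDensity (κ θ σ t y₀ y : ℝ) : ℝ :=
  Real.exp (-cirYt κ t y₀ / (2 * cirLt κ σ t)) /
      (2 * cirYt κ t y₀ ^ ((2 * κ * θ / σ ^ 2 - 1) / 2) * cirLt κ σ t) *
    Real.exp (-y / (2 * cirLt κ σ t)) * y ^ ((2 * κ * θ / σ ^ 2 - 1) / 2) *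
    besselI (2 * κ * θ / σ ^ 2 - 1) (Real.sqrt (y * cirYt κ t y₀) / cirLt κ σ t)


/-!
Series terms of `I_ν` are bounded using `n! Γ(n+ν+1) ≳ (n!)²/(n+1)` and the central binomial
estimate `(2n choose n) ≤ 4ⁿ/√(n+1)`, giving `I_ν(x) ≲ (x/2)^ν ∑ √(n+1) x^{2n}/(2n)!`.
By AM-GM, `√(n+1) ≤ (n+1)/(2s) + s/2` with `s = 1 + √x`, and the resulting weighted exponential
series sums to at most `s eˣ`. Hence `I_ν(x) ≤ C_ν (x/2)^ν (1 + √x) eˣ`; substituting this into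
the density, the three exponentials combine into `exp(-(√y - √y_t)²/(2L_t))`.
-/

open Real Nat

lemma factorial_mul_Gamma_add_one_le {μ : ℝ} (hμ : 0 ≤ μ) (n : ℕ) :
    n ! * Gamma (μ + 1) ≤ Gamma (n + μ + 1) := by
  induction n with
  | zero => simp
  | succ k ih =>
    have hk : 0 < (k : ℝ) + μ + 1 := by positivity
    rw [Nat.factorial_succ, Nat.cast_mul, Nat.cast_succ, mul_assoc,
      show (k : ℝ) + 1 + μ + 1 = (k + μ + 1) + 1 by ring, Gamma_add_one hk.ne']
    exact mul_le_mul (by linarith) ih (by positivity) hk.le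

lemma Gamma_add_two_mul_factorial_le {ν : ℝ} (hν : -1 < ν) (n : ℕ) :
    Gamma (ν + 2) * n ! ≤ (|ν| + 1) * (n + 1) * Gamma (n + ν + 1) := by
  have hpos : 0 < (n : ℝ) + ν + 1 := by linarith [(n.cast_nonneg : (0 : ℝ) ≤ n)]
  have h := factorial_mul_Gamma_add_one_le (μ := ν + 1) (by linarith) n
  rw [show (n : ℝ) + (ν + 1) + 1 = (n + ν + 1) + 1 by ring, Gamma_add_one hpos.ne',
    show ν + 1 + 1 = ν + 2 by ring] at h
  have hle : (n : ℝ) + ν + 1 ≤ (|ν| + 1) * (n + 1) := by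
    nlinarith [le_abs_self ν, abs_nonneg ν, (n.cast_nonneg : (0 : ℝ) ≤ n)]
  calc Gamma (ν + 2) * n ! = n ! * Gamma (ν + 2) := mul_comm _ _
    _ ≤ (n + ν + 1) * Gamma (n + ν + 1) := h
    _ ≤ _ := mul_le_mul_of_nonneg_right hle (Gamma_pos_of_pos hpos).le

lemma succ_mul_centralBinom_sq_le (n : ℕ) : (n + 1) * centralBinom n ^ 2 ≤ 16 ^ n := by
  induction n with
  | zero => simp
  | succ k ih =>
    have key : (k + 1) ^ 2 * ((k + 2) * centralBinom (k + 1) ^ 2) ≤ (k + 1) ^ 2 * 16 ^ (k + 1) :=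
      calc (k + 1) ^ 2 * ((k + 2) * centralBinom (k + 1) ^ 2)
          = 4 * (k + 2) * (2 * k + 1) ^ 2 * centralBinom k ^ 2 := by
            rw [← mul_assoc, mul_comm _ (k + 2), mul_assoc, ← mul_pow,
              Nat.succ_mul_centralBinom_succ]
            ring
        _ ≤ 16 * (k + 1) ^ 2 * ((k + 1) * centralBinom k ^ 2) := by
            rw [show 16 * (k + 1) ^ 2 * ((k + 1) * centralBinom k ^ 2)
              = 16 * (k + 1) ^ 3 * centralBinom k ^ 2 by ring]
            exact Nat.mul_le_mul_right _ (by nlinarith)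
        _ ≤ 16 * (k + 1) ^ 2 * 16 ^ k := by gcongr
        _ = (k + 1) ^ 2 * 16 ^ (k + 1) := by ring
    exact Nat.le_of_mul_le_mul_left key (by positivity)

lemma sqrt_succ_mul_factorial_two_mul_le (n : ℕ) :
    √(n + 1) * ((2 * n)! : ℝ) ≤ 4 ^ n * (n ! : ℝ) ^ 2 := by
  have hfac : ((2 * n)! : ℝ) = centralBinom n * (n ! : ℝ) ^ 2 := by
    rw [two_mul, ← Nat.add_choose_mul_factorial_mul_factorial, ← two_mul,
      ← centralBinom_eq_two_mul_choose]
    push_cast; ring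
  have hcb : √(n + 1) * centralBinom n ≤ 4 ^ n := by
    rw [← sqrt_sq (by positivity : (0:ℝ) ≤ centralBinom n), ← sqrt_mul (by positivity),
      show (4 : ℝ) ^ n = √(16 ^ n) by
        rw [show (16 : ℝ) ^ n = (4 ^ n) ^ 2 by rw [← pow_mul, mul_comm, pow_mul]; norm_num,
          sqrt_sq (by positivity)]]
    exact sqrt_le_sqrt (by exact_mod_cast succ_mul_centralBinom_sq_le n)
  rw [hfac, ← mul_assoc]
  gcongr

lemma Gamma_add_two_mul_factorial_two_mul_le {ν : ℝ} (hν : -1 < ν) (n : ℕ) :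
    Gamma (ν + 2) * (2 * n)! ≤ (|ν| + 1) * √(n + 1) * 4 ^ n * (n ! * Gamma (n + ν + 1)) := by
  have hs : 0 < √((n : ℝ) + 1) := sqrt_pos.2 (by positivity)
  refine le_of_mul_le_mul_right ?_ hs
  calc Gamma (ν + 2) * (2 * n)! * √(n + 1) = Gamma (ν + 2) * (√(n + 1) * (2 * n)!) := by ring
    _ ≤ Gamma (ν + 2) * (4 ^ n * (n ! : ℝ) ^ 2) :=
        mul_le_mul_of_nonneg_left (sqrt_succ_mul_factorial_two_mul_le n)
          (Gamma_pos_of_pos (by linarith)).le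
    _ = 4 ^ n * n ! * (Gamma (ν + 2) * n !) := by ring
    _ ≤ 4 ^ n * n ! * ((|ν| + 1) * (n + 1) * Gamma (n + ν + 1)) :=
        mul_le_mul_of_nonneg_left (Gamma_add_two_mul_factorial_le hν n) (by positivity)
    _ = _ := by
        linear_combination (-(4 ^ n * n ! * (|ν| + 1) * Gamma (n + ν + 1))) *
          mul_self_sqrt (by positivity : (0 : ℝ) ≤ n + 1)

lemma besselI_series_term_le {ν x : ℝ} (hν : -1 < ν) (hx : 0 ≤ x) (n : ℕ) :
    (x / 2) ^ (2 * n) / (n ! * Gamma (n + ν + 1)) ≤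
      (|ν| + 1) / Gamma (ν + 2) * (√(n + 1) * (x ^ (2 * n) / (2 * n)!)) := by
  have hD : 0 < (n ! : ℝ) * Gamma (n + ν + 1) :=
    mul_pos (by positivity) (Gamma_pos_of_pos (by linarith [(n.cast_nonneg : (0 : ℝ) ≤ n)]))
  have hG : 0 < Gamma (ν + 2) := Gamma_pos_of_pos (by linarith)
  have h4 : (x / 2) ^ (2 * n) = x ^ (2 * n) / 4 ^ n := by rw [div_pow, pow_mul (2 : ℝ)]; norm_num
  rw [h4, div_div, div_le_iff₀ (mul_pos (by positivity) hD)]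
  calc x ^ (2 * n) = x ^ (2 * n) / ((2 * n)! * Gamma (ν + 2)) * (Gamma (ν + 2) * (2 * n)!) := by
        field_simp
    _ ≤ x ^ (2 * n) / ((2 * n)! * Gamma (ν + 2)) *
        ((|ν| + 1) * √(n + 1) * 4 ^ n * (n ! * Gamma (n + ν + 1))) :=
        mul_le_mul_of_nonneg_left (Gamma_add_two_mul_factorial_two_mul_le hν n) (by positivity)
    _ = _ := by field_simp

lemma hasSum_natCast_mul_pow_div_factorial (x : ℝ) :
    HasSum (fun m : ℕ => m * (x ^ m / m !)) (x * exp x) := by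
  have h : HasSum (fun m : ℕ => x * (x ^ m / m !)) (x * exp x) := by
    simpa [Real.exp_eq_exp_ℝ] using (NormedSpace.expSeries_div_hasSum_exp x).mul_left x
  rw [← hasSum_nat_add_iff' 1]
  simp only [Finset.sum_range_one, CharP.cast_eq_zero, zero_mul, sub_zero]
  refine h.congr_fun fun m => ?_
  rw [factorial_succ, pow_succ]
  push_cast
  field_simp

lemma hasSum_affine_mul_pow_div_factorial (a b x : ℝ) :
    HasSum (fun m : ℕ => (a * m + b) * (x ^ m / m !)) ((a * x + b) * exp x) := by
  have h₁ := (hasSum_natCast_mul_pow_div_factorial x).mul_left a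
  have h₂ : HasSum (fun m : ℕ => b * (x ^ m / m !)) (b * exp x) := by
    simpa [Real.exp_eq_exp_ℝ] using (NormedSpace.expSeries_div_hasSum_exp x).mul_left b
  rw [show (a * x + b) * exp x = a * (x * exp x) + b * exp x by ring]
  exact (h₁.add h₂).congr_fun fun m => by ring

lemma tsum_besselI_series_le {ν x : ℝ} (hν : -1 < ν) (hx : 0 ≤ x) :
    ∑' n : ℕ, (x / 2) ^ (2 * n) / (n ! * Gamma (n + ν + 1)) ≤
      (|ν| + 1) / Gamma (ν + 2) * ((1 + √x) * exp x) := by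
  set K := (|ν| + 1) / Gamma (ν + 2)
  set s := 1 + √x
  have hs : 0 < s := by positivity
  have hK : 0 ≤ K := div_nonneg (by positivity) (Gamma_pos_of_pos (by linarith)).le
  -- `F (2n) / (x^{2n}/(2n)!) = (n+1)/(2s) + s/2`, the AM-GM bound for `√(n+1)`
  set F : ℕ → ℝ := fun m => (1 / (4 * s) * m + (1 / (2 * s) + s / 2)) * (x ^ m / m !)
  have hF := hasSum_affine_mul_pow_div_factorial (1 / (4 * s)) (1 / (2 * s) + s / 2) x
  have hF_nonneg : ∀ m, 0 ≤ F m := fun m => by positivity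
  have hterm : ∀ n : ℕ, (x / 2) ^ (2 * n) / (n ! * Gamma (n + ν + 1)) ≤ K * F (2 * n) := by
    intro n
    refine (besselI_series_term_le hν hx n).trans (mul_le_mul_of_nonneg_left ?_ hK)
    refine mul_le_mul_of_nonneg_right ?_ (by positivity)
    have amgm := two_mul_le_add_sq s √(n + 1)
    rw [sq_sqrt (by positivity)] at amgm
    rw [show 1 / (4 * s) * ((2 * n : ℕ) : ℝ) + (1 / (2 * s) + s / 2) = (s ^ 2 + (n + 1)) / (2 * s) by
      push_cast; field_simp; ring, le_div_iff₀ (by positivity)]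
    linarith
  have hFeven : Summable (fun n => F (2 * n)) :=
    hF.summable.comp_injective (mul_right_injective₀ two_ne_zero)
  have hf_nonneg : ∀ n : ℕ, 0 ≤ (x / 2) ^ (2 * n) / (n ! * Gamma (n + ν + 1)) := fun n =>
    div_nonneg (by positivity)
      (mul_pos (by positivity) (Gamma_pos_of_pos (by linarith [(n.cast_nonneg : (0:ℝ) ≤ n)]))).le
  calc ∑' n : ℕ, (x / 2) ^ (2 * n) / (n ! * Gamma (n + ν + 1))
      ≤ ∑' n, K * F (2 * n) :=
        Summable.tsum_le_tsum hterm (.of_nonneg_of_le hf_nonneg hterm (hFeven.mul_left K))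
          (hFeven.mul_left K)
    _ ≤ K * ∑' m, F m := by
        rw [tsum_mul_left]
        exact mul_le_mul_of_nonneg_left
          (tsum_comp_le_tsum_of_inj hF.summable hF_nonneg (mul_right_injective₀ two_ne_zero)) hK
    _ ≤ K * (s * exp x) := by
        rw [hF.tsum_eq]
        refine mul_le_mul_of_nonneg_left (mul_le_mul_of_nonneg_right ?_ (exp_pos x).le) hK
        rw [show 1 / (4 * s) * x + (1 / (2 * s) + s / 2) = (x + 2 + 2 * s ^ 2) / (4 * s) by
          field_simp; ring, div_le_iff₀ (by positivity)]
        nlinarith [sq_sqrt hx, sqrt_nonneg x]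

lemma besselI_le {ν x : ℝ} (hν : -1 < ν) (hx : 0 ≤ x) :
    besselI ν x ≤ (|ν| + 1) / Gamma (ν + 2) * (x / 2) ^ ν * ((1 + √x) * exp x) := by
  rw [besselI, mul_comm _ ((x / 2) ^ ν), mul_assoc]
  exact mul_le_mul_of_nonneg_left (tsum_besselI_series_le hν hx) (by positivity)

lemma exp_neg_sq_sqrt_sub_sqrt_div {a y : ℝ} (ha : 0 ≤ a) (hy : 0 ≤ y) (L : ℝ) :
    exp (-(√y - √a) ^ 2 / (2 * L)) =
      exp (-a / (2 * L)) * exp (-y / (2 * L)) * exp (√(y * a) / L) := by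
  rw [← exp_add, ← exp_add, sub_sq, sq_sqrt hy, sq_sqrt ha, sqrt_mul hy]
  congr 1
  by_cases hL : L = 0
  · simp [hL]
  field_simp
  ring

lemma besselI_density_le_gaussian {β L a y : ℝ} (hβ : 0 < β) (hL : 0 < L) (ha : 0 < a) (hy : 0 < y) :
    exp (-a / (2 * L)) / (2 * a ^ ((β - 1) / 2) * L) * exp (-y / (2 * L)) * y ^ ((β - 1) / 2) *
        besselI (β - 1) (√(y * a) / L) ≤
      (|β - 1| + 1) / Gamma (β + 1) * 2 ^ (-β) / L ^ (β + 1 / 2) *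
        exp (-(√y - √a) ^ 2 / (2 * L)) * y ^ (β - 1) * (L ^ (1 / 2 : ℝ) + (y * a) ^ (1 / 4 : ℝ)) := by
  set K := (|β - 1| + 1) / Gamma (β + 1)
  have hya : 0 < y * a := mul_pos hy ha
  have hI := besselI_le (ν := β - 1) (by linarith) (x := √(y * a) / L) (by positivity)
  rw [show β - 1 + 2 = β + 1 by ring] at hI
  have harg : (√(y * a) / L / 2) ^ (β - 1) =
      y ^ ((β - 1) / 2) * a ^ ((β - 1) / 2) / (2 ^ (β - 1) * L ^ (β - 1)) := by
    rw [div_div, div_rpow (sqrt_nonneg _) (by positivity), mul_rpow hL.le zero_le_two,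
      sqrt_eq_rpow, ← rpow_mul hya.le, ← mul_rpow hy.le ha.le]
    ring_nf
  have hsqrt : √(√(y * a) / L) = (y * a) ^ (1 / 4 : ℝ) / L ^ (1 / 2 : ℝ) := by
    rw [sqrt_eq_rpow, div_rpow (sqrt_nonneg _) hL.le, sqrt_eq_rpow, ← rpow_mul hya.le]
    norm_num
  have hy2 : y ^ ((β - 1) / 2) * y ^ ((β - 1) / 2) = y ^ (β - 1) := by
    rw [← rpow_add hy]; ring_nf
  have hLpow : L ^ (β + 1 / 2) = L ^ (β - 1) * L ^ (1 / 2 : ℝ) * L := by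
    rw [← rpow_add hL, ← rpow_add_one hL.ne']; ring_nf
  have h2pow : (2 : ℝ) ^ (-β) = (2 ^ (β - 1) * 2)⁻¹ := by
    rw [rpow_neg zero_le_two, ← rpow_add_one two_ne_zero]; ring_nf
  calc _ ≤ exp (-a / (2 * L)) / (2 * a ^ ((β - 1) / 2) * L) * exp (-y / (2 * L)) *
        y ^ ((β - 1) / 2) * (K * (√(y * a) / L / 2) ^ (β - 1) *
          ((1 + √(√(y * a) / L)) * exp (√(y * a) / L))) :=
        mul_le_mul_of_nonneg_left hI (by positivity)
    _ = _ := by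
        rw [harg, hsqrt, exp_neg_sq_sqrt_sub_sqrt_div ha.le hy.le, ← hy2, hLpow, h2pow]
        have : 0 < a ^ ((β - 1) / 2) := by positivity
        field_simp

lemma cirLt_pos {κ σ t : ℝ} (hκ : 0 < κ) (hσ : 0 < σ) (ht : 0 < t) : 0 < cirLt κ σ t := by
  have : exp (-(κ * t)) < 1 := exp_lt_one_iff.2 (by nlinarith)
  unfold cirLt
  exact mul_pos (by positivity) (by linarith)

theorem stmt_7 (β : ℝ) (hβ : 0 < β) :
    ∃ C : ℝ, 0 < C ∧
      ∀ κ θ σ : ℝ, 0 < κ → 0 < θ → 0 < σ → β = 2 * κ * θ / σ ^ 2 →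
        ∀ t : ℝ, 0 < t → ∀ y₀ : ℝ, 0 < y₀ → ∀ y : ℝ, 0 < y →
          cirDensity κ θ σ t y₀ y ≤
            C / cirLt κ σ t ^ (β + 1 / 2) *
              Real.exp (-(Real.sqrt y - Real.sqrt (cirYt κ t y₀)) ^ 2 / (2 * cirLt κ σ t)) *
              y ^ (β - 1) *
              (cirLt κ σ t ^ ((1 : ℝ) / 2) + (y * cirYt κ t y₀) ^ ((1 : ℝ) / 4)) := by
  refine ⟨(|β - 1| + 1) / Gamma (β + 1) * 2 ^ (-β),
    mul_pos (div_pos (by positivity) (Gamma_pos_of_pos (by linarith))) (by positivity), ?_⟩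
  intro κ θ σ hκ _ hσ hβeq t ht y₀ hy₀ y hy
  have hyt : 0 < cirYt κ t y₀ := mul_pos hy₀ (exp_pos _)
  rw [cirDensity, ← hβeq]
  exact besselI_density_le_gaussian hβ (cirLt_pos hκ hσ ht) hyt hy
end
end

section
/- Let (B_t)_{t>0} be a real-valued centered Gaussian process, i.e., every finite family (B_{s₁},…,B_{s_k}) is a centered Gaussian random vector, with covariance E[B_s B_t] = min(s,t) for all s, t > 0. Let (t_n)_{n∈ℕ} be a deterministic sequence of positive reals with lim_{n→∞} t_n = 0. Then, almost surely, liminf_{n→∞} B_{t_n}/√{t_n} = −∞, and likewise limsup_{n→∞} B_{t_n}/√{t_n} = +∞. -/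
/-!
Pass to a subsequence `s k = t (φ k)` with `s (k + 1) ≤ s k / 4`. The normalised values
`Y k = B (s k) / √(s k)` are standard Gaussians, any two of them jointly Gaussian with
correlation `ρ j k = √(s k / s j) ≤ 2 ^ (j - k)` for `j ≤ k`. Fix `M` and `b > 2 M`. The
variables `exp (b * Y k)` have mean `exp (b² / 2) > exp (b M)` and covariances `O(ρ j k)`, so
along a window of `n` consecutive indices their sum has mean of order `n` but variance only
`O(n)`. By Chebyshev, the event that `Y k ≤ M` throughout the window has probability `O(1 / n)`,
hence `Y k > M` infinitely often almost surely; no independence or zero-one law is needed. The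
`liminf` follows by applying this to `-B`.
-/

open MeasureTheory ProbabilityTheory Filter Real Finset

lemma sum_pow_le_of_injOn {r : ℝ} (hr₀ : 0 ≤ r) (hr₁ : r < 1) {s : Finset ℕ} {g : ℕ → ℕ}
    (hg : Set.InjOn g s) : ∑ k ∈ s, r ^ g k ≤ (1 - r)⁻¹ := by
  rw [← sum_image (f := (r ^ ·)) hg, ← tsum_geometric_of_lt_one hr₀ hr₁]
  exact (summable_geometric_of_lt_one hr₀ hr₁).sum_le_tsum _ fun i _ => pow_nonneg hr₀ i

lemma sum_pow_dist_le {r : ℝ} (hr₀ : 0 ≤ r) (hr₁ : r < 1) (s : Finset ℕ) (j : ℕ) :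
    ∑ k ∈ s, r ^ j.dist k ≤ 2 * (1 - r)⁻¹ := by
  rw [← sum_filter_add_sum_filter_not s (· < j)]
  have hlt : ∑ k ∈ s with k < j, r ^ j.dist k ≤ (1 - r)⁻¹ := by
    rw [sum_congr rfl fun k hk => by rw [Nat.dist_eq_sub_of_le_right (mem_filter.1 hk).2.le]]
    exact sum_pow_le_of_injOn hr₀ hr₁ fun a ha b hb h => by
      simp only [coe_filter, Set.mem_ofPred_eq] at ha hb; omega
  have hge : ∑ k ∈ s with ¬k < j, r ^ j.dist k ≤ (1 - r)⁻¹ := by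
    rw [sum_congr rfl fun k hk => by
      rw [Nat.dist_eq_sub_of_le (not_lt.1 (mem_filter.1 hk).2)]]
    exact sum_pow_le_of_injOn hr₀ hr₁ fun a ha b hb h => by
      simp only [coe_filter, Set.mem_ofPred_eq] at ha hb; omega
  linarith

lemma sum_sum_pow_dist_le {r : ℝ} (hr₀ : 0 ≤ r) (hr₁ : r < 1) (s : Finset ℕ) :
    ∑ j ∈ s, ∑ k ∈ s, r ^ j.dist k ≤ 2 * (1 - r)⁻¹ * #s := by
  simpa [mul_comm] using sum_le_card_nsmul s _ _ fun j _ => sum_pow_dist_le hr₀ hr₁ s j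

lemma exp_mul_sub_one_le {ρ : ℝ} (hρ₀ : 0 ≤ ρ) (hρ₁ : ρ ≤ 1) (x : ℝ) :
    exp (ρ * x) - 1 ≤ ρ * (exp x - 1) := by
  have := convexOn_exp.2 (Set.mem_univ x) (Set.mem_univ 0) hρ₀ (sub_nonneg.2 hρ₁) (by ring)
  simp only [smul_eq_mul, mul_zero, add_zero, exp_zero, mul_one] at this
  linarith

lemma inv_sqrt_mul_inv_sqrt_mul_self {s : ℝ} (hs : 0 < s) : (√s)⁻¹ * (√s)⁻¹ * s = 1 := by
  rw [← mul_inv, mul_self_sqrt hs.le, inv_mul_cancel₀ hs.ne']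

lemma min_div_sqrt_mul_sqrt_le {a b q : ℝ} (ha : 0 < a) (hb : 0 < b) (hq : 0 ≤ q)
    (h : b ≤ q ^ 2 * a) : min a b / (√a * √b) ≤ q := by
  calc min a b / (√a * √b) ≤ b / (√a * √b) := by gcongr; exact min_le_right a b
    _ = √b / √a := by field_simp; exact (sq_sqrt hb.le).symm
    _ ≤ q := by
      rw [div_le_iff₀ (sqrt_pos.2 ha)]
      calc √b ≤ √(q ^ 2 * a) := sqrt_le_sqrt h
        _ = q * √a := by rw [sqrt_mul (sq_nonneg q), sqrt_sq hq]

lemma min_div_sqrt_mul_sqrt_le_pow_dist {s : ℕ → ℝ} (hs : ∀ n, 0 < s n)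
    (hdec : ∀ n, s (n + 1) ≤ 4⁻¹ * s n) (j k : ℕ) :
    min (s j) (s k) / (√(s j) * √(s k)) ≤ 2⁻¹ ^ j.dist k := by
  wlog hjk : j ≤ k generalizing j k
  · rw [min_comm, mul_comm, Nat.dist_comm]
    exact this k j (le_of_not_ge hjk)
  refine min_div_sqrt_mul_sqrt_le (hs j) (hs k) (by positivity) ?_
  obtain ⟨d, rfl⟩ := Nat.exists_eq_add_of_le hjk
  calc s (j + d) ≤ 4⁻¹ ^ d * s j :=
        le_geom (u := fun i => s (j + i)) (by norm_num) d fun i _ => hdec (j + i)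
    _ = (2⁻¹ ^ j.dist (j + d)) ^ 2 * s j := by
        rw [Nat.dist_eq_sub_of_le hjk, Nat.add_sub_cancel_left, ← pow_mul, mul_comm d, pow_mul]
        norm_num

lemma exists_strictMono_forall_rel {R : ℕ → ℕ → Prop} (h : ∀ m, ∀ᶠ n in atTop, R m n) :
    ∃ φ : ℕ → ℕ, StrictMono φ ∧ ∀ n, R (φ n) (φ (n + 1)) := by
  choose f hf using fun m => ((h m).and (eventually_gt_atTop m)).exists
  refine ⟨fun n => f^[n] 0, strictMono_nat_of_lt_succ fun n => ?_, fun n => ?_⟩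
  · simpa only [Function.iterate_succ_apply'] using (hf _).2
  · simpa only [Function.iterate_succ_apply'] using (hf _).1

lemma limsup_coe_eq_top_of_frequently {α : Type*} {f : Filter α} {u : α → ℝ}
    (h : ∀ M : ℕ, ∃ᶠ x in f, (M : ℝ) < u x) : limsup (fun x => (u x : EReal)) f = ⊤ := by
  refine (EReal.eq_top_iff_forall_lt _).2 fun y => ?_
  obtain ⟨M, hM⟩ := exists_nat_gt y
  calc (y : EReal) < (M : ℝ) := EReal.coe_lt_coe_iff.2 hM
    _ ≤ _ := le_limsup_of_frequently_le' ((h M).mono fun x hx => EReal.coe_le_coe_iff.2 hx.le)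

section

variable {Ω : Type*} [MeasurableSpace Ω] {P : Measure Ω}

section SecondMoment

variable [IsProbabilityMeasure P]

-- Chebyshev on the window sums `∑ k ∈ Ico N (N + n), X k`, whose mean `n m` outgrows their
-- standard deviation `O(√n)`.
lemma measure_forall_le_eq_zero_of_sum_covariance_le {X : ℕ → Ω → ℝ}
    (hX : ∀ k, MemLp (X k) 2 P) {m a C : ℝ} (hm : ∀ k, P[X k] = m) (ha : a < m)
    (hcov : ∀ s : Finset ℕ, ∑ j ∈ s, ∑ k ∈ s, cov[X j, X k; P] ≤ C * #s) (N : ℕ) :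
    P {ω | ∀ k ≥ N, X k ω ≤ a} = 0 := by
  have hbound : ∀ n : ℕ, 0 < n →
      P {ω | ∀ k ≥ N, X k ω ≤ a} ≤ ENNReal.ofReal (C / (m - a) ^ 2 / n) := by
    intro n hn
    set s := Ico N (N + n)
    have hs : #s = n := by simp [s]
    set S : Ω → ℝ := fun ω => ∑ k ∈ s, X k ω
    have hS : MemLp S 2 P := memLp_finsetSum _ fun k _ => hX k
    have hmean : P[S] = n * m := by
      rw [integral_finsetSum _ fun k _ => (hX k).integrable one_le_two]
      simp [hm, hs]
    have hgap : 0 < n * (m - a) := mul_pos (Nat.cast_pos.2 hn) (sub_pos.2 ha)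
    calc P {ω | ∀ k ≥ N, X k ω ≤ a}
        ≤ P {ω | n * (m - a) ≤ |S ω - P[S]|} := by
          refine measure_mono fun ω hω => ?_
          have hle : S ω ≤ n * a := by
            refine (sum_le_sum fun k hk => hω k (mem_Ico.1 hk).1).trans ?_
            simp
          simp only [Set.mem_ofPred_eq, hmean]
          rw [abs_sub_comm]
          exact (by linarith : n * (m - a) ≤ n * m - S ω).trans (le_abs_self _)
      _ ≤ ENNReal.ofReal (Var[S; P] / (n * (m - a)) ^ 2) :=
          meas_ge_le_variance_div_sq hS hgap
      _ ≤ ENNReal.ofReal (C / (m - a) ^ 2 / n) := by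
          refine ENNReal.ofReal_le_ofReal ?_
          rw [variance_fun_sum' fun k _ => hX k]
          calc _ ≤ C * #s / (n * (m - a)) ^ 2 := by gcongr; exact hcov s
            _ = C / (m - a) ^ 2 / n := by
              rw [hs]; field_simp
  refine le_antisymm (ge_of_tendsto ?_ (eventually_atTop.2 ⟨1, hbound⟩)) zero_le
  simpa using ENNReal.tendsto_ofReal (tendsto_const_div_atTop_nhds_zero_nat (C / (m - a) ^ 2))

lemma ae_frequently_lt_of_sum_covariance_le {X : ℕ → Ω → ℝ}
    (hX : ∀ k, MemLp (X k) 2 P) {m a C : ℝ} (hm : ∀ k, P[X k] = m) (ha : a < m)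
    (hcov : ∀ s : Finset ℕ, ∑ j ∈ s, ∑ k ∈ s, cov[X j, X k; P] ≤ C * #s) :
    ∀ᵐ ω ∂P, ∃ᶠ k in atTop, a < X k ω := by
  rw [ae_iff]
  refine measure_mono_null (fun ω hω => ?_) (measure_iUnion_null
    (measure_forall_le_eq_zero_of_sum_covariance_le hX hm ha hcov))
  simp only [Set.mem_ofPred_eq, not_frequently, not_lt, eventually_atTop] at hω
  exact Set.mem_iUnion.2 hω

end SecondMoment

section Gaussian

variable {Y Y' : Ω → ℝ} {v : NNReal}

lemma integral_exp_mul_of_map_eq_gaussianReal (hY : P.map Y = gaussianReal 0 v) (b : ℝ) :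
    ∫ ω, exp (b * Y ω) ∂P = exp (v * b ^ 2 / 2) := by
  simpa [mgf] using mgf_gaussianReal hY b

lemma memLp_exp_mul_of_map_eq_gaussianReal [IsProbabilityMeasure P] (hYm : Measurable Y)
    (hY : P.map Y = gaussianReal 0 v) (b : ℝ) : MemLp (fun ω => exp (b * Y ω)) 2 P := by
  refine (memLp_two_iff_integrable_sq (by fun_prop)).2 ?_
  simp_rw [← exp_nat_mul, ← mul_assoc]
  rw [← mgf_pos_iff, mgf_gaussianReal hY]
  exact exp_pos _

lemma covariance_exp_mul_le [IsProbabilityMeasure P] (hYm : Measurable Y) (hY'm : Measurable Y')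
    (hY : P.map Y = gaussianReal 0 1) (hY' : P.map Y' = gaussianReal 0 1) {ρ : ℝ}
    (hρ₀ : 0 ≤ ρ) (hρ₁ : ρ ≤ 1)
    (hYY' : P.map (fun ω => Y ω + Y' ω) = gaussianReal 0 (2 + 2 * ρ).toNNReal) (b : ℝ) :
    cov[fun ω => exp (b * Y ω), fun ω => exp (b * Y' ω); P]
      ≤ exp (b ^ 2) * (exp (b ^ 2) - 1) * ρ := by
  rw [covariance_eq_sub (memLp_exp_mul_of_map_eq_gaussianReal hYm hY b)
    (memLp_exp_mul_of_map_eq_gaussianReal hY'm hY' b)]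
  have hprod : P[(fun ω => exp (b * Y ω)) * fun ω => exp (b * Y' ω)]
      = exp (b ^ 2) * exp (ρ * b ^ 2) := by
    simp only [Pi.mul_apply, ← exp_add, ← mul_add]
    rw [integral_exp_mul_of_map_eq_gaussianReal hYY', Real.coe_toNNReal _ (by positivity)]
    congr 1
    ring
  rw [hprod, integral_exp_mul_of_map_eq_gaussianReal hY,
    integral_exp_mul_of_map_eq_gaussianReal hY', NNReal.coe_one, one_mul,
    ← exp_add (b ^ 2 / 2), add_halves]
  calc exp (b ^ 2) * exp (ρ * b ^ 2) - exp (b ^ 2) = exp (b ^ 2) * (exp (ρ * b ^ 2) - 1) := by ring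
    _ ≤ exp (b ^ 2) * (ρ * (exp (b ^ 2) - 1)) := by gcongr; exact exp_mul_sub_one_le hρ₀ hρ₁ _
    _ = exp (b ^ 2) * (exp (b ^ 2) - 1) * ρ := by ring

end Gaussian

lemma ae_frequently_lt_of_gaussian [IsProbabilityMeasure P] {Y : ℕ → Ω → ℝ}
    (hYm : ∀ k, Measurable (Y k)) (hY : ∀ k, P.map (Y k) = gaussianReal 0 1)
    {ρ : ℕ → ℕ → ℝ} (hρ₀ : ∀ j k, 0 ≤ ρ j k) {r : ℝ} (hr₀ : 0 ≤ r) (hr₁ : r < 1)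
    (hρ : ∀ j k, ρ j k ≤ r ^ j.dist k)
    (hYY : ∀ j k, P.map (fun ω => Y j ω + Y k ω) = gaussianReal 0 (2 + 2 * ρ j k).toNNReal)
    (M : ℝ) : ∀ᵐ ω ∂P, ∃ᶠ k in atTop, M < Y k ω := by
  -- any `b > 2 M` makes the threshold `exp (b M)` lie below the mean `exp (b² / 2)`
  set b := 2 * |M| + 1
  have hb : 0 < b := by positivity
  set K := exp (b ^ 2) * (exp (b ^ 2) - 1)
  have hK : 0 ≤ K := mul_nonneg (exp_pos _).le (sub_nonneg.2 (one_le_exp (sq_nonneg b)))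
  have hcov : ∀ s : Finset ℕ, ∑ j ∈ s, ∑ k ∈ s,
      cov[fun ω => exp (b * Y j ω), fun ω => exp (b * Y k ω); P] ≤ K * (2 * (1 - r)⁻¹) * #s := by
    intro s
    calc _ ≤ ∑ j ∈ s, ∑ k ∈ s, K * r ^ j.dist k := by
          refine sum_le_sum fun j _ => sum_le_sum fun k _ => ?_
          have hρ₁ : ρ j k ≤ 1 := (hρ j k).trans (pow_le_one₀ hr₀ hr₁.le)
          exact (covariance_exp_mul_le (hYm j) (hYm k) (hY j) (hY k) (hρ₀ j k) hρ₁ (hYY j k)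
            b).trans (mul_le_mul_of_nonneg_left (hρ j k) hK)
      _ = K * ∑ j ∈ s, ∑ k ∈ s, r ^ j.dist k := by simp only [mul_sum]
      _ ≤ K * (2 * (1 - r)⁻¹ * #s) := by gcongr; exact sum_sum_pow_dist_le hr₀ hr₁ s
      _ = _ := by ring
  have hgap : exp (b * M) < exp (b ^ 2 / 2) := exp_lt_exp.2 (by nlinarith [le_abs_self M])
  filter_upwards [ae_frequently_lt_of_sum_covariance_le
    (fun k => memLp_exp_mul_of_map_eq_gaussianReal (hYm k) (hY k) b)
    (fun k => by simpa using integral_exp_mul_of_map_eq_gaussianReal (hY k) b) hgap hcov] with ω hω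
  exact hω.mono fun k hk => lt_of_mul_lt_mul_left (exp_lt_exp.1 hk) hb.le

def HasBrownianGaussianLaws (P : Measure Ω) (B : ℝ → Ω → ℝ) : Prop :=
  ∀ (k : ℕ) (s c : Fin k → ℝ), (∀ i, 0 < s i) →
    Measure.map (fun ω => ∑ i, c i * B (s i) ω) P =
      gaussianReal 0 (∑ i, ∑ j, c i * c j * min (s i) (s j)).toNNReal

namespace HasBrownianGaussianLaws

variable {B : ℝ → Ω → ℝ}

lemma neg (hB : HasBrownianGaussianLaws P B) : HasBrownianGaussianLaws P (fun t ω => -B t ω) := by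
  intro k s c hs
  simpa using hB k s (-c) hs

lemma map_div_sqrt (hB : HasBrownianGaussianLaws P B) {s : ℝ} (hs : 0 < s) :
    P.map (fun ω => B s ω / √s) = gaussianReal 0 1 := by
  have := hB 1 ![s] ![(√s)⁻¹] (by simp [hs])
  simp only [Fin.sum_univ_one, Matrix.cons_val_fin_one, min_self] at this
  simp_rw [div_eq_inv_mul]
  rwa [inv_sqrt_mul_inv_sqrt_mul_self hs, Real.toNNReal_one] at this

lemma map_add_div_sqrt (hB : HasBrownianGaussianLaws P B) {s s' : ℝ} (hs : 0 < s) (hs' : 0 < s') :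
    P.map (fun ω => B s ω / √s + B s' ω / √s') =
      gaussianReal 0 (2 + 2 * (min s s' / (√s * √s'))).toNNReal := by
  have := hB 2 ![s, s'] ![(√s)⁻¹, (√s')⁻¹] (by simp [Fin.forall_fin_two, hs, hs'])
  simp only [Fin.sum_univ_two, Matrix.cons_val_zero, Matrix.cons_val_one] at this
  have hvar : (√s)⁻¹ * (√s)⁻¹ * min s s + (√s)⁻¹ * (√s')⁻¹ * min s s' +
      ((√s')⁻¹ * (√s)⁻¹ * min s' s + (√s')⁻¹ * (√s')⁻¹ * min s' s') =
      2 + 2 * (min s s' / (√s * √s')) := by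
    rw [min_self, min_self, min_comm s' s, inv_sqrt_mul_inv_sqrt_mul_self hs,
      inv_sqrt_mul_inv_sqrt_mul_self hs', div_eq_inv_mul, mul_inv]
    ring
  simp_rw [div_eq_inv_mul]
  rwa [hvar, div_eq_inv_mul] at this

variable [IsProbabilityMeasure P] {t : ℕ → ℝ}

lemma ae_frequently_lt_div_sqrt (hB : HasBrownianGaussianLaws P B) (hmeas : ∀ s, Measurable (B s))
    (ht : ∀ n, 0 < t n) (hlim : Tendsto t atTop (nhds 0)) (M : ℝ) :
    ∀ᵐ ω ∂P, ∃ᶠ n in atTop, M < B (t n) ω / √(t n) := by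
  obtain ⟨φ, hφ, hdec⟩ := exists_strictMono_forall_rel (R := fun m n => t n ≤ 4⁻¹ * t m)
    fun m => hlim.eventually (ge_mem_nhds (by have := ht m; positivity))
  have hs : ∀ k, 0 < t (φ k) := fun k => ht (φ k)
  have hρ₀ : ∀ j k, 0 ≤ min (t (φ j)) (t (φ k)) / (√(t (φ j)) * √(t (φ k))) := fun j k =>
    div_nonneg (le_min (hs j).le (hs k).le) (by positivity)
  filter_upwards [ae_frequently_lt_of_gaussian (Y := fun k ω => B (t (φ k)) ω / √(t (φ k)))
    (fun k => (hmeas _).div_const _) (fun k => hB.map_div_sqrt (hs k)) hρ₀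
    (by norm_num : (0 : ℝ) ≤ 2⁻¹) (by norm_num) (min_div_sqrt_mul_sqrt_le_pow_dist hs hdec)
    (fun j k => hB.map_add_div_sqrt (hs j) (hs k)) M] with ω hω
  exact hφ.tendsto_atTop.frequently hω

lemma ae_limsup_div_sqrt_eq_top (hB : HasBrownianGaussianLaws P B) (hmeas : ∀ s, Measurable (B s))
    (ht : ∀ n, 0 < t n) (hlim : Tendsto t atTop (nhds 0)) :
    ∀ᵐ ω ∂P, limsup (fun n => ((B (t n) ω / √(t n) : ℝ) : EReal)) atTop = ⊤ := by
  filter_upwards [ae_all_iff.2 fun M : ℕ => hB.ae_frequently_lt_div_sqrt hmeas ht hlim M]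
    with ω hω using limsup_coe_eq_top_of_frequently hω

end HasBrownianGaussianLaws

end

theorem stmt_8 {Ω : Type*} [MeasurableSpace Ω] (P : Measure Ω) [IsProbabilityMeasure P]
    (B : ℝ → Ω → ℝ) (hmeas : ∀ t, Measurable (B t))
    (hgauss : ∀ (k : ℕ) (s : Fin k → ℝ) (c : Fin k → ℝ), (∀ i, 0 < s i) →
      Measure.map (fun ω => ∑ i, c i * B (s i) ω) P =
        ProbabilityTheory.gaussianReal 0
          (∑ i, ∑ j, c i * c j * min (s i) (s j)).toNNReal)
    (t : ℕ → ℝ) (ht : ∀ n, 0 < t n) (hlim : Filter.Tendsto t Filter.atTop (nhds 0)) :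
    ∀ᵐ ω ∂P,
      Filter.liminf (fun n => ((B (t n) ω / Real.sqrt (t n) : ℝ) : EReal)) Filter.atTop = ⊥ ∧
      Filter.limsup (fun n => ((B (t n) ω / Real.sqrt (t n) : ℝ) : EReal)) Filter.atTop = ⊤ := by
  have hB : HasBrownianGaussianLaws P B := hgauss
  filter_upwards [hB.ae_limsup_div_sqrt_eq_top hmeas ht hlim,
    hB.neg.ae_limsup_div_sqrt_eq_top (fun s => (hmeas s).neg) ht hlim] with ω hpos hneg
  have hreflect : (fun n => ((B (t n) ω / √(t n) : ℝ) : EReal)) =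
      -fun n => ((-B (t n) ω / √(t n) : ℝ) : EReal) := by
    ext n
    simp [neg_div]
  refine ⟨?_, hpos⟩
  rw [hreflect, EReal.liminf_neg, hneg, EReal.neg_top]
end

section
/- Let b : [0,∞) → ℝ be nonincreasing with b(y) > 0 for all y ≥ 0, left-continuous at every point of (0,∞), and continuous at 0. For y ≥ 0 write b(y⁺) = sup_{z>y} b(z) (which equals the right limit lim_{z↓y} b(z) since b is nonincreasing). Equip S = (0,∞) × [0,∞) with the subspace topology inherited from ℝ² and set E = {(s,y) ∈ S : s ≤ b(y)}. Then the interior of E in S equals {(s,y) ∈ S : s < b(y⁺)}, this interior is nonempty, and E equals the closure in S of its interior. -/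
/- STATEMENT 9: structure of the t-sections of the exercise region.
`S = (0,∞) × [0,∞)` (as a subspace of `ℝ²`, here realized as a subtype),
`E = {(s,y) ∈ S : s ≤ b(y)}`, with `b` positive, nonincreasing, left-continuous on
`(0,∞)` and continuous at `0`.  Then the interior of `E` in `S` is
`{(s,y) ∈ S : s < b(y⁺)}` where `b(y⁺) = sup_{z>y} b(z)`; this interior is nonempty,
and `E` is the closure of its interior. -/
theorem stmt_9 (b : ℝ → ℝ)
    (hpos : ∀ y : ℝ, 0 ≤ y → 0 < b y)
    (hanti : AntitoneOn b (Set.Ici 0))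
    (hleft : ∀ y : ℝ, 0 < y → Filter.Tendsto b (nhdsWithin y (Set.Iio y)) (nhds (b y)))
    (h0 : ContinuousWithinAt b (Set.Ici 0) 0) :
    interior {p : {q : ℝ × ℝ // 0 < q.1 ∧ 0 ≤ q.2} | p.val.1 ≤ b p.val.2} =
        {p : {q : ℝ × ℝ // 0 < q.1 ∧ 0 ≤ q.2} | p.val.1 < sSup (b '' Set.Ioi p.val.2)} ∧
      (interior {p : {q : ℝ × ℝ // 0 < q.1 ∧ 0 ≤ q.2} | p.val.1 ≤ b p.val.2}).Nonempty ∧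
      {p : {q : ℝ × ℝ // 0 < q.1 ∧ 0 ≤ q.2} | p.val.1 ≤ b p.val.2} =
        closure (interior {p : {q : ℝ × ℝ // 0 < q.1 ∧ 0 ≤ q.2} | p.val.1 ≤ b p.val.2}) := by
  classical
  set S := {q : ℝ × ℝ // 0 < q.1 ∧ 0 ≤ q.2} with hS
  set E : Set S := {p | p.val.1 ≤ b p.val.2} with hE
  set T : Set S := {p | p.val.1 < sSup (b '' Set.Ioi p.val.2)} with hT
  -- basic facts
  have hbdd : ∀ y : ℝ, 0 ≤ y → BddAbove (b '' Set.Ioi y) := by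
    intro y hy
    refine ⟨b y, ?_⟩
    rintro _ ⟨z, hz, rfl⟩
    exact hanti hy (le_of_lt (lt_of_le_of_lt hy hz)) (le_of_lt hz)
  have hne : ∀ y : ℝ, (b '' Set.Ioi y).Nonempty :=
    fun y => ⟨b (y + 1), ⟨y + 1, Set.mem_Ioi.mpr (lt_add_one y), rfl⟩⟩
  have hSupLe : ∀ y : ℝ, 0 ≤ y → sSup (b '' Set.Ioi y) ≤ b y := by
    intro y hy
    refine csSup_le (hne y) ?_
    rintro _ ⟨z, hz, rfl⟩
    exact hanti hy (le_of_lt (lt_of_le_of_lt hy hz)) (le_of_lt hz)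
  -- T is open
  have hTopen : IsOpen T := by
    rw [isOpen_iff_mem_nhds]
    intro p hp
    have hp' : p.val.1 < sSup (b '' Set.Ioi p.val.2) := hp
    obtain ⟨_, ⟨z, hz, rfl⟩, hlt⟩ := exists_lt_of_lt_csSup (hne p.val.2) hp'
    have hW : (Set.Iio (b z) ×ˢ Set.Iio z) ∈ nhds p.val :=
      (isOpen_Iio.prod isOpen_Iio).mem_nhds ⟨hlt, hz⟩
    rw [nhds_induced]
    refine Filter.mem_of_superset (Filter.preimage_mem_comap hW) ?_
    rintro q ⟨hq1, hq2⟩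
    have hzval : b z ∈ b '' Set.Ioi q.val.2 := ⟨z, hq2, rfl⟩
    exact lt_of_lt_of_le hq1 (le_csSup (hbdd q.val.2 q.prop.2) hzval)
  -- T ⊆ E
  have hTE : T ⊆ E := by
    intro p hp
    exact le_of_lt (lt_of_lt_of_le hp (hSupLe p.val.2 p.prop.2))
  -- interior E ⊆ T
  have hIntSub : interior E ⊆ T := by
    intro p hp
    rw [mem_interior_iff_mem_nhds, nhds_induced, Filter.mem_comap] at hp
    obtain ⟨W, hW, hWE⟩ := hp
    obtain ⟨ε, hε, hball⟩ := Metric.mem_nhds_iff.mp hW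
    have hqS : (0:ℝ) < p.val.1 + ε / 2 ∧ (0:ℝ) ≤ p.val.2 + ε / 2 :=
      ⟨by have := p.prop.1; linarith, by have := p.prop.2; linarith⟩
    have hqball : ((p.val.1 + ε / 2, p.val.2 + ε / 2) : ℝ × ℝ) ∈ Metric.ball p.val ε := by
      rw [Metric.mem_ball, Prod.dist_eq]
      dsimp only
      refine max_lt ?_ ?_ <;>
      · rw [Real.dist_eq]
        simp only [add_sub_cancel_left]
        rw [abs_of_pos (half_pos hε)]
        linarith
    have hqE : (⟨(p.val.1 + ε / 2, p.val.2 + ε / 2), hqS⟩ : S) ∈ E := hWE (hball hqball)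
    have hqE' : p.val.1 + ε / 2 ≤ b (p.val.2 + ε / 2) := hqE
    have hle : b (p.val.2 + ε / 2) ≤ sSup (b '' Set.Ioi p.val.2) :=
      le_csSup (hbdd p.val.2 p.prop.2) ⟨p.val.2 + ε / 2, by simp [Set.mem_Ioi]; linarith, rfl⟩
    show p.val.1 < _
    linarith
  have hInt : interior E = T := subset_antisymm hIntSub (interior_maximal hTE hTopen)
  -- nonemptiness
  have hb1 : 0 < b 1 := hpos 1 zero_le_one
  have hp0S : (0:ℝ) < b 1 / 2 ∧ (0:ℝ) ≤ 0 := ⟨by linarith, le_rfl⟩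
  have hNe : T.Nonempty := by
    refine ⟨⟨(b 1 / 2, 0), hp0S⟩, ?_⟩
    show b 1 / 2 < sSup (b '' Set.Ioi 0)
    have : b 1 ≤ sSup (b '' Set.Ioi 0) :=
      le_csSup (hbdd 0 le_rfl) ⟨1, by norm_num, rfl⟩
    linarith
  -- E is closed
  have hClosed : IsClosed E := by
    rw [← isOpen_compl_iff, isOpen_iff_mem_nhds]
    intro p hp
    have hbp : b p.val.2 < p.val.1 := not_le.mp hp
    set y := p.val.2 with hy
    set η := (p.val.1 - b y) / 2 with hη
    have hηpos : 0 < η := by linarith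
    -- get δ such that nearby smaller y' have b y' < b y + η
    obtain ⟨δ, hδpos, hδ⟩ : ∃ δ > 0, ∀ y' : ℝ, 0 ≤ y' → y - δ < y' → y' < y → b y' < b y + η := by
      rcases eq_or_lt_of_le p.prop.2 with h | h
      · refine ⟨1, one_pos, fun y' hy' _ hy'y => absurd (lt_of_le_of_lt hy' hy'y) ?_⟩
        rw [hy, ← h]
        exact lt_irrefl 0
      · have hev : ∀ᶠ y' in nhdsWithin y (Set.Iio y), b y' < b y + η :=
          (hleft y h).eventually (eventually_lt_nhds (by linarith))
        rw [Filter.eventually_iff, mem_nhdsWithin] at hev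
        obtain ⟨u, hu, hyu, husub⟩ := hev
        obtain ⟨δ, hδpos, hball⟩ := Metric.isOpen_iff.mp hu y hyu
        refine ⟨δ, hδpos, fun y' _ h1 h2 => ?_⟩
        refine husub ⟨hball ?_, h2⟩
        rw [Metric.mem_ball, Real.dist_eq, abs_of_neg (by linarith)]
        linarith
    have hW : (Set.Ioi (b y + η) ×ˢ Set.Ioi (y - δ)) ∈ nhds p.val := by
      refine (isOpen_Ioi.prod isOpen_Ioi).mem_nhds ⟨?_, ?_⟩
      · show b y + η < p.val.1; linarith
      · show y - δ < p.val.2; rw [← hy]; linarith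
    rw [nhds_induced]
    refine Filter.mem_of_superset (Filter.preimage_mem_comap hW) ?_
    rintro q ⟨hq1, hq2⟩
    show ¬ (q.val.1 ≤ b q.val.2)
    rw [not_le]
    rcases lt_or_ge q.val.2 y with h | h
    · exact lt_trans (hδ q.val.2 q.prop.2 hq2 h) hq1
    · have hble : b q.val.2 ≤ b y := hanti (hy ▸ p.prop.2) (le_trans (hy ▸ p.prop.2) h) h
      calc b q.val.2 ≤ b y := hble
        _ < b y + η := by linarith
        _ < q.val.1 := hq1
  -- E ⊆ closure T
  have hsub : E ⊆ closure T := by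
    intro p hp
    have hpE : p.val.1 ≤ b p.val.2 := hp
    rw [mem_closure_iff_nhds]
    intro U hU
    rw [nhds_induced, Filter.mem_comap] at hU
    obtain ⟨W, hW, hWU⟩ := hU
    obtain ⟨ε, hεpos, hball⟩ := Metric.mem_nhds_iff.mp hW
    set s := p.val.1 with hs
    set y := p.val.2 with hy
    have hspos : 0 < s := p.prop.1
    set δ := min ε s with hδ
    have hδpos : 0 < δ := lt_min hεpos hspos
    have hδε : δ ≤ ε := min_le_left _ _
    have hδs : δ ≤ s := min_le_right _ _
    -- find y' ∈ [0, y], |y' - y| < ε, with s - δ/2 < sSup (b '' Ioi y')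
    obtain ⟨y', hy'0, hy'dist, hy'sup⟩ :
        ∃ y' : ℝ, 0 ≤ y' ∧ |y' - y| < ε ∧ s - δ / 2 < sSup (b '' Set.Ioi y') := by
      rcases eq_or_lt_of_le p.prop.2 with h | h
      · -- y = 0 : take y' = 0, use continuity at 0
        have hy0 : y = 0 := by rw [hy, ← h]
        refine ⟨0, le_rfl, by rw [hy0]; simpa using hεpos, ?_⟩
        have htend : Filter.Tendsto b (nhdsWithin 0 (Set.Ioi 0)) (nhds (b 0)) :=
          h0.mono_left (nhdsWithin_mono _ Set.Ioi_subset_Ici_self)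
        have hev : ∀ᶠ z in nhdsWithin 0 (Set.Ioi 0), b z ≤ sSup (b '' Set.Ioi 0) := by
          filter_upwards [self_mem_nhdsWithin] with z hz
          exact le_csSup (hbdd 0 le_rfl) ⟨z, hz, rfl⟩
        have hb0le : b 0 ≤ sSup (b '' Set.Ioi 0) := le_of_tendsto htend hev
        have hsb0 : s ≤ b 0 := by rw [← hy0]; exact hpE
        linarith
      · -- y > 0 : approach from the left
        set a := max 0 (y - ε) with ha
        have hay : a < y := by
          rw [ha, max_lt_iff]
          exact ⟨h, by linarith⟩
        have hev1 : ∀ᶠ z in nhdsWithin y (Set.Iio y), s - δ / 4 < b z :=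
          (hleft y h).eventually (eventually_gt_nhds (by linarith))
        have hev2 : ∀ᶠ z in nhdsWithin y (Set.Iio y), a < z :=
          eventually_nhdsWithin_of_eventually_nhds (eventually_gt_nhds hay)
        have hev3 : ∀ᶠ z in nhdsWithin y (Set.Iio y), z < y :=
          eventually_mem_nhdsWithin
        obtain ⟨y'', hy''1, hy''2, hy''3⟩ := (hev1.and (hev2.and hev3)).exists
        refine ⟨(a + y'') / 2, ?_, ?_, ?_⟩
        · have h0a : (0:ℝ) ≤ a := le_max_left _ _
          linarith
        · have haeps : y - ε ≤ a := le_max_right _ _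
          rw [abs_of_neg (by linarith)]
          linarith
        · have hb'' : b y'' ≤ sSup (b '' Set.Ioi ((a + y'') / 2)) := by
            refine le_csSup (hbdd _ ?_) ⟨y'', ?_, rfl⟩
            · have h0a : (0:ℝ) ≤ a := le_max_left _ _
              linarith
            · rw [Set.mem_Ioi]; linarith
          linarith
    -- the approximating point
    have hqS : (0:ℝ) < s - δ / 2 ∧ (0:ℝ) ≤ y' := ⟨by linarith, hy'0⟩
    have hqball : ((s - δ / 2, y') : ℝ × ℝ) ∈ Metric.ball p.val ε := by
      rw [Metric.mem_ball, Prod.dist_eq]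
      dsimp only
      refine max_lt ?_ ?_
      · rw [Real.dist_eq, ← hs, show s - δ / 2 - s = -(δ / 2) by ring, abs_neg,
          abs_of_pos (half_pos hδpos)]
        linarith
      · rw [Real.dist_eq, ← hy]
        exact hy'dist
    refine ⟨⟨(s - δ / 2, y'), hqS⟩, hWU (hball hqball), ?_⟩
    show s - δ / 2 < sSup (b '' Set.Ioi y')
    exact hy'sup
  refine ⟨hInt, ?_, ?_⟩
  · rw [hInt]; exact hNe
  · rw [hInt]
    exact subset_antisymm hsub (closure_minimal hTE hClosed)
end

section
/- Let Δx > 0 and let g ∈ C²(ℝ) with g, g', g'' ∈ L¹(ℝ). Then | Σ_{l∈ℤ} g(lΔx)Δx − ∫_ℝ g(x)dx | ≤ (Δx²/12) ∫_ℝ |g''(x)|dx. -/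
open MeasureTheory

/-!
On a cell `[a, b]` of length `Δx`, integrating by parts twice against the kernel
`K(x) = (x - a)(x - b)/2 + Δx²/12` gives
`∫ₐᵇ K g'' = ∫ₐᵇ g - Δx (g a + g b)/2 + Δx²/12 (g' b - g' a)`, and `|K| ≤ Δx²/12` on `[a, b]`.
Summing over the cells `[lΔx, (l+1)Δx]`, the trapezoid terms add up to `Δx Σ g(lΔx)` and the
derivative corrections telescope away. Both sample series converge because
`|f a| Δx ≤ ∫ₐᵇ |f| + Δx ∫ₐᵇ |f'|` for `f = g, g'`.
-/

open Set intervalIntegral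

section Sampling

variable {E : Type*} [NormedAddCommGroup E] [NormedSpace ℝ E] {h : ℝ}

theorem MeasureTheory.Integrable.hasSum_intervalIntegral_intCast_mul {μ : Measure ℝ}
    {f : ℝ → E} (hf : Integrable f μ) (hh : 0 < h) :
    HasSum (fun n : ℤ => ∫ x in n * h..(n + 1 : ℤ) * h, f x ∂μ) (∫ x, f x ∂μ) := by
  have hle (n : ℤ) : (n : ℝ) * h ≤ ((n + 1 : ℤ) : ℝ) * h := by gcongr; omega
  simp_rw [integral_of_le (hle _), ← zsmul_eq_mul]
  rw [← setIntegral_univ, ← iUnion_Ioc_zsmul hh]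
  exact hasSum_integral_iUnion (fun _ => measurableSet_Ioc) (pairwise_disjoint_Ioc_zsmul h)
    hf.integrableOn

theorem norm_mul_sub_le_integral_norm_add [CompleteSpace E] {f : ℝ → E} (hf : ContDiff ℝ 1 f)
    {a b : ℝ} (hab : a ≤ b) :
    ‖f a‖ * (b - a) ≤ (∫ x in a..b, ‖f x‖) + (b - a) * ∫ x in a..b, ‖deriv f x‖ := by
  have hderiv (x : ℝ) : HasDerivAt f (deriv f x) x :=
    (hf.differentiable one_ne_zero x).hasDerivAt
  have hcont : Continuous (deriv f) := hf.continuous_deriv le_rfl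
  have hpoint : ∀ x ∈ Icc a b, ‖f a‖ ≤ ‖f x‖ + ∫ t in a..b, ‖deriv f t‖ := by
    intro x hx
    have hftc : ∫ t in a..x, deriv f t = f x - f a :=
      integral_eq_sub_of_hasDerivAt (fun t _ => hderiv t) (hcont.intervalIntegrable a x)
    calc ‖f a‖ = ‖f x - ∫ t in a..x, deriv f t‖ := by rw [hftc, sub_sub_cancel]
      _ ≤ ‖f x‖ + ∫ t in a..x, ‖deriv f t‖ :=
        (norm_sub_le _ _).trans (by gcongr; exact norm_integral_le_integral_norm hx.1)
      _ ≤ ‖f x‖ + ∫ t in a..b, ‖deriv f t‖ := by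
        gcongr
        exact integral_mono_interval le_rfl hx.1 hx.2
          (ae_of_all _ fun _ => norm_nonneg _) (hcont.norm.intervalIntegrable a b)
  calc ‖f a‖ * (b - a) = ∫ _ in a..b, ‖f a‖ := by simp [mul_comm]
    _ ≤ ∫ x in a..b, (‖f x‖ + ∫ t in a..b, ‖deriv f t‖) :=
      integral_mono_on hab intervalIntegrable_const
        ((hf.continuous.norm.add continuous_const).intervalIntegrable a b) hpoint
    _ = _ := by
      rw [integral_add (hf.continuous.norm.intervalIntegrable a b) intervalIntegrable_const,
        intervalIntegral.integral_const, smul_eq_mul]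

theorem summable_comp_intCast_mul [CompleteSpace E] {f : ℝ → E} (hf : ContDiff ℝ 1 f)
    (hfi : Integrable f) (hf'i : Integrable (deriv f)) (hh : 0 < h) :
    Summable fun n : ℤ => f (n * h) := by
  refine .of_norm_bounded
    (((hfi.norm.hasSum_intervalIntegral_intCast_mul hh).summable.mul_left h⁻¹).add
      (hf'i.norm.hasSum_intervalIntegral_intCast_mul hh).summable) fun n => ?_
  have hcell : ((n + 1 : ℤ) : ℝ) * h - n * h = h := by push_cast; ring
  have := norm_mul_sub_le_integral_norm_add hf (a := n * h) (b := (n + 1 : ℤ) * h)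
    (by linarith)
  rw [hcell] at this
  calc ‖f (n * h)‖ = h⁻¹ * (‖f (n * h)‖ * h) := by field_simp
    _ ≤ h⁻¹ * ((∫ x in n * h..(n + 1 : ℤ) * h, ‖f x‖)
        + h * ∫ x in n * h..(n + 1 : ℤ) * h, ‖deriv f x‖) := by gcongr
    _ = _ := by field_simp

end Sampling

section BernoulliKernel

/-- `(b - a)² / 2 · B₂((x - a) / (b - a))`, where `B₂(t) = t² - t + 1/6` is the second Bernoulli
polynomial. -/
noncomputable def bernoulliKernel (a b x : ℝ) : ℝ := (x - a) * (x - b) / 2 + (b - a) ^ 2 / 12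

variable {a b : ℝ}

theorem hasDerivAt_bernoulliKernel (x : ℝ) :
    HasDerivAt (bernoulliKernel a b) (x - (a + b) / 2) x := by
  have := ((((hasDerivAt_id x).sub_const a).mul ((hasDerivAt_id x).sub_const b)).div_const
    2).add_const ((b - a) ^ 2 / 12)
  exact this.congr_deriv (by simp only [id]; ring)

theorem abs_bernoulliKernel_le {x : ℝ} (hx : x ∈ Icc a b) :
    |bernoulliKernel a b x| ≤ (b - a) ^ 2 / 12 := by
  obtain ⟨hax, hxb⟩ := hx
  rw [bernoulliKernel, abs_le]
  constructor <;> nlinarith [sq_nonneg (2 * x - a - b)]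

/-- The kernel has second derivative `1`, slopes `∓(b - a)/2` and the value `(b - a)²/12` at both
ends, so two integrations by parts produce the trapezoid and endpoint correction terms. -/
theorem integral_bernoulliKernel_mul_deriv_deriv {f : ℝ → ℝ} (hf : ContDiff ℝ 2 f) :
    ∫ x in a..b, bernoulliKernel a b x * deriv (deriv f) x =
      (∫ x in a..b, f x) - (b - a) / 2 * (f a + f b) + (b - a) ^ 2 / 12 * (deriv f b - deriv f a)
    := by
  have hf' : ContDiff ℝ 1 (deriv f) := hf.deriv'
  have hderiv (x : ℝ) : HasDerivAt f (deriv f x) x :=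
    (hf.differentiable two_ne_zero x).hasDerivAt
  have hderiv' (x : ℝ) : HasDerivAt (deriv f) (deriv (deriv f) x) x :=
    (hf'.differentiable one_ne_zero x).hasDerivAt
  have hmid : ∀ x ∈ uIcc a b, HasDerivAt (fun x => x - (a + b) / 2) 1 x :=
    fun x _ => (hasDerivAt_id x).sub_const _
  rw [integral_mul_deriv_eq_deriv_mul (fun x _ => hasDerivAt_bernoulliKernel x)
      (fun x _ => hderiv' x) ((continuous_sub_right _).intervalIntegrable a b)
      ((hf'.continuous_deriv le_rfl).intervalIntegrable a b),
    integral_mul_deriv_eq_deriv_mul hmid (fun x _ => hderiv x) intervalIntegrable_const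
      ((hf.continuous_deriv one_le_two).intervalIntegrable a b)]
  simp only [bernoulliKernel, one_mul]
  ring

theorem abs_integral_sub_trapezoid_le {f : ℝ → ℝ} (hf : ContDiff ℝ 2 f) (hab : a ≤ b) :
    |(∫ x in a..b, f x) - (b - a) / 2 * (f a + f b) + (b - a) ^ 2 / 12 * (deriv f b - deriv f a)|
      ≤ (b - a) ^ 2 / 12 * ∫ x in a..b, |deriv (deriv f) x| := by
  have hf'' : Continuous (deriv (deriv f)) := (hf.deriv' (n := 1)).continuous_deriv le_rfl
  rw [← integral_bernoulliKernel_mul_deriv_deriv hf, ← intervalIntegral.integral_const_mul,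
    ← Real.norm_eq_abs]
  refine norm_integral_le_of_norm_le hab (ae_of_all _ fun x hx => ?_)
    (g := fun x => (b - a) ^ 2 / 12 * |deriv (deriv f) x|)
    ((continuous_const.mul hf''.abs).intervalIntegrable a b)
  rw [norm_mul, Real.norm_eq_abs, Real.norm_eq_abs]
  exact mul_le_mul_of_nonneg_right (abs_bernoulliKernel_le (Ioc_subset_Icc_self hx))
    (abs_nonneg _)

end BernoulliKernel

theorem stmt_15 (Δx : ℝ) (hΔx : 0 < Δx) (g : ℝ → ℝ)
    (hg : ContDiff ℝ 2 g) (hg0 : Integrable g)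
    (hg1 : Integrable (deriv g)) (hg2 : Integrable (deriv (deriv g))) :
    |(∑' l : ℤ, g ((l : ℝ) * Δx)) * Δx - ∫ x, g x| ≤
      Δx ^ 2 / 12 * ∫ x, |deriv (deriv g) x| := by
  have hu : Summable fun l : ℤ => g (l * Δx) :=
    summable_comp_intCast_mul (hg.of_le one_le_two) hg0 hg1 hΔx
  have hv : Summable fun l : ℤ => deriv g (l * Δx) :=
    summable_comp_intCast_mul hg.deriv' hg1 hg2 hΔx
  have shift {w : ℤ → ℝ} (hw : Summable w) : HasSum (fun l => w (l + 1)) (∑' l, w l) :=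
    (Equiv.addRight 1).hasSum_iff.mpr hw.hasSum
  set err : ℤ → ℝ := fun l => (∫ x in l * Δx..(l + 1 : ℤ) * Δx, g x)
    - Δx / 2 * (g (l * Δx) + g ((l + 1 : ℤ) * Δx))
    + Δx ^ 2 / 12 * (deriv g ((l + 1 : ℤ) * Δx) - deriv g (l * Δx))
  have herr : HasSum err ((∫ x, g x) - (∑' l : ℤ, g (l * Δx)) * Δx) := by
    have hsum := ((hg0.hasSum_intervalIntegral_intCast_mul hΔx).sub
      ((hu.hasSum.add (shift hu)).mul_left (Δx / 2))).add
      (((shift hv).sub hv.hasSum).mul_left (Δx ^ 2 / 12))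
    rwa [sub_self, mul_zero, add_zero, ← two_mul, ← mul_assoc, div_mul_cancel₀ _ two_ne_zero,
      mul_comm Δx] at hsum
  have hbound (l : ℤ) :
      ‖err l‖ ≤ Δx ^ 2 / 12 * ∫ x in l * Δx..(l + 1 : ℤ) * Δx, |deriv (deriv g) x| := by
    have hcell : ((l + 1 : ℤ) : ℝ) * Δx - l * Δx = Δx := by push_cast; ring
    have := abs_integral_sub_trapezoid_le hg (a := l * Δx) (b := (l + 1 : ℤ) * Δx) (by linarith)
    rwa [hcell] at this
  rw [abs_sub_comm, ← herr.tsum_eq]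
  exact tsum_of_norm_bounded ((hg2.abs.hasSum_intervalIntegral_intCast_mul hΔx).mul_left _) hbound
end

section
/- Let Δx > 0, X₀ ∈ ℝ and let g ∈ C²(ℝ) with g, g', g'' ∈ L²(ℝ). Then Σ_{i∈ℤ} g(X₀ + iΔx)² Δx ≤ ‖g‖²_{L²(ℝ)} + (Δx²/6)( ‖g'‖²_{L²(ℝ)} + ‖g‖_{L²(ℝ)}·‖g''‖_{L²(ℝ)} ). -/
/-!
On a cell `[a, a + h]` the trapezoidal rule for `φ = g²` has the Peano-kernel error
representation `h/2 (φ a + φ (a + h)) = ∫ φ + ∫ K φ''` with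
`K t = (t - a)(a + h - t)/2 ∈ [0, h²/8]`, and summing over the cells of the grid turns the left
side into `Δx ∑ g(X₀ + iΔx)²`. Since `∫_ℝ φ'' = 0`, the kernel may be shifted by its mean `h²/12`,
after which `|K - h²/12| ≤ h²/12`; inserting `φ'' = 2g'² + 2gg''` and Cauchy–Schwarz for
`∫ |g g''|` gives the bound.
-/

open MeasureTheory Set

lemma integral_abs_mul_le_sqrt_mul_sqrt {α : Type*} [MeasurableSpace α] {μ : Measure α}
    {u v : α → ℝ} (hu : MemLp u 2 μ) (hv : MemLp v 2 μ) :
    ∫ x, |u x * v x| ∂μ ≤ √(∫ x, u x ^ 2 ∂μ) * √(∫ x, v x ^ 2 ∂μ) := by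
  have h := integral_mul_norm_le_Lp_mul_Lq (μ := μ) Real.HolderConjugate.two_two
    (by simpa using hu) (by simpa using hv)
  simpa [Real.sqrt_eq_rpow, abs_mul, Real.rpow_two] using h

lemma hasSum_intervalIntegral_grid {E : Type*} [NormedAddCommGroup E] [NormedSpace ℝ E]
    {f : ℝ → E} (hf : Integrable f) {h : ℝ} (hh : 0 < h) (x₀ : ℝ) :
    HasSum (fun i : ℤ => ∫ t in x₀ + i * h..x₀ + i * h + h, f t) (∫ t, f t) := by
  have hcells (i : ℤ) :
      Ioc (x₀ + i • h) (x₀ + (i + 1) • h) = Ioc (x₀ + i * h) (x₀ + i * h + h) := by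
    simp only [zsmul_eq_mul]; push_cast; ring_nf
  have := hasSum_integral_iUnion (fun i => measurableSet_Ioc) (pairwise_disjoint_Ioc_add_zsmul x₀ h)
    (by rw [iUnion_Ioc_add_zsmul hh]; exact hf.integrableOn)
  rw [iUnion_Ioc_add_zsmul hh, setIntegral_univ] at this
  simpa only [hcells, intervalIntegral.integral_of_le (le_add_of_nonneg_right hh.le)] using this

noncomputable def trapezoidKernel (a b t : ℝ) : ℝ := (t - a) * (b - t) / 2

lemma trapezoidKernel_nonneg {a b t : ℝ} (ha : a ≤ t) (hb : t ≤ b) : 0 ≤ trapezoidKernel a b t := by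
  unfold trapezoidKernel; have := mul_nonneg (sub_nonneg.2 ha) (sub_nonneg.2 hb); linarith

lemma trapezoidKernel_le (a b t : ℝ) : trapezoidKernel a b t ≤ (b - a) ^ 2 / 8 := by
  unfold trapezoidKernel; nlinarith [sq_nonneg (2 * t - a - b)]

lemma continuous_trapezoidKernel (a b : ℝ) : Continuous (trapezoidKernel a b) := by
  unfold trapezoidKernel; fun_prop

theorem integral_add_trapezoidKernel_mul_eq {φ φ' φ'' : ℝ → ℝ} {a b : ℝ}
    (hφ : ∀ t ∈ uIcc a b, HasDerivAt φ (φ' t) t)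
    (hφ' : ∀ t ∈ uIcc a b, HasDerivAt φ' (φ'' t) t) (hφ'' : ContinuousOn φ'' (uIcc a b)) :
    ∫ t in a..b, (φ t + trapezoidKernel a b t * φ'' t) = (b - a) / 2 * (φ a + φ b) := by
  have hderiv : ∀ t ∈ uIcc a b, HasDerivAt
      (fun t => (t - (a + b) / 2) * φ t + trapezoidKernel a b t * φ' t)
      (φ t + trapezoidKernel a b t * φ'' t) t := by
    intro t ht
    have hK : HasDerivAt (trapezoidKernel a b) ((a + b) / 2 - t) t :=
      ((((hasDerivAt_id' t).sub_const a).mul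
        ((hasDerivAt_id' t).const_sub b)).div_const 2).congr_deriv (by ring)
    exact ((((hasDerivAt_id' t).sub_const ((a + b) / 2)).mul (hφ t ht)).add
      (hK.mul (hφ' t ht))).congr_deriv (by ring)
  have hcont : ContinuousOn (fun t => φ t + trapezoidKernel a b t * φ'' t) (uIcc a b) :=
    (HasDerivAt.continuousOn hφ).add ((continuous_trapezoidKernel a b).continuousOn.mul hφ'')
  rw [intervalIntegral.integral_eq_sub_of_hasDerivAt hderiv hcont.intervalIntegrable]
  unfold trapezoidKernel; ring

lemma shifted_kernel_mul_le {k h u v : ℝ} (hk₀ : 0 ≤ k) (hk : k ≤ h ^ 2 / 8) :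
    (k - h ^ 2 / 12) * (2 * u ^ 2 + 2 * v) ≤ h ^ 2 / 12 * u ^ 2 + h ^ 2 / 6 * |v| := by
  have hv : (k - h ^ 2 / 12) * v ≤ h ^ 2 / 12 * |v| := by
    have : |k - h ^ 2 / 12| ≤ h ^ 2 / 12 := abs_le.2 ⟨by nlinarith [sq_nonneg h], by linarith⟩
    calc (k - h ^ 2 / 12) * v ≤ |k - h ^ 2 / 12| * |v| := by rw [← abs_mul]; exact le_abs_self _
      _ ≤ h ^ 2 / 12 * |v| := by gcongr
  nlinarith [sq_nonneg u]

lemma tsum_mul_le_of_trapezoid_le {u v : ℤ → ℝ} {h s : ℝ} (hh : 0 < h) (hu : ∀ i, 0 ≤ u i)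
    (hv : HasSum v s) (huv : ∀ i, h / 2 * (u i + u (i + 1)) ≤ v i) : (∑' i, u i) * h ≤ s := by
  have hsum : Summable u := by
    refine Summable.of_nonneg_of_le hu (fun i => ?_) (hv.summable.mul_left (2 / h))
    have := huv i; have := hu (i + 1)
    rw [div_mul_eq_mul_div, le_div_iff₀ hh]; nlinarith
  have htrap : HasSum (fun i => h / 2 * (u i + u (i + 1))) (h / 2 * (∑' i, u i + ∑' i, u i)) :=
    (hsum.hasSum.add ((Equiv.addRight (1 : ℤ)).hasSum_iff.2 hsum.hasSum)).mul_left _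
  linarith [hasSum_le huv htrap hv]

noncomputable def secondDerivOfSq (g : ℝ → ℝ) (t : ℝ) : ℝ :=
  2 * deriv g t ^ 2 + 2 * (g t * deriv (deriv g) t)

section ContDiffTwo

variable {g : ℝ → ℝ}

lemma ContDiff.continuous_deriv_deriv (hg : ContDiff ℝ 2 g) : Continuous (deriv (deriv g)) :=
  (ContDiff.deriv' (n := 1) hg).continuous_deriv le_rfl

lemma ContDiff.hasDerivAt_sq (hg : ContDiff ℝ 2 g) (t : ℝ) :
    HasDerivAt (fun t => g t ^ 2) (2 * (g t * deriv g t)) t :=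
  ((hg.differentiable two_ne_zero t).hasDerivAt.pow 2).congr_deriv (by ring)

lemma ContDiff.hasDerivAt_two_mul_mul_deriv (hg : ContDiff ℝ 2 g) (t : ℝ) :
    HasDerivAt (fun t => 2 * (g t * deriv g t)) (secondDerivOfSq g t) t := by
  have hg' : Differentiable ℝ (deriv g) := (ContDiff.deriv' (n := 1) hg).differentiable one_ne_zero
  exact (((hg.differentiable two_ne_zero t).hasDerivAt.mul (hg' t).hasDerivAt).const_mul
    2).congr_deriv (by unfold secondDerivOfSq; ring)

lemma ContDiff.continuous_secondDerivOfSq (hg : ContDiff ℝ 2 g) :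
    Continuous (secondDerivOfSq g) := by
  have := hg.continuous; have := hg.continuous_deriv one_le_two; have := hg.continuous_deriv_deriv
  unfold secondDerivOfSq; fun_prop

lemma integrable_secondDerivOfSq (hg0 : MemLp g 2) (hg1 : MemLp (deriv g) 2)
    (hg2 : MemLp (deriv (deriv g)) 2) : Integrable (secondDerivOfSq g) :=
  ((hg1.integrable_sq).const_mul 2).add ((hg0.integrable_mul hg2).const_mul 2)

lemma integral_secondDerivOfSq_eq_zero (hg : ContDiff ℝ 2 g) (hg0 : MemLp g 2)
    (hg1 : MemLp (deriv g) 2) (hg2 : MemLp (deriv (deriv g)) 2) :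
    ∫ t, secondDerivOfSq g t = 0 :=
  integral_eq_zero_of_hasDerivAt_of_integrable hg.hasDerivAt_two_mul_mul_deriv
    (integrable_secondDerivOfSq hg0 hg1 hg2) ((hg0.integrable_mul hg1).const_mul 2)

lemma trapezoid_sq_le (hg : ContDiff ℝ 2 g) (a : ℝ) {h : ℝ} (hh : 0 ≤ h) :
    h / 2 * (g a ^ 2 + g (a + h) ^ 2) ≤
      (∫ t in a..a + h, g t ^ 2) + h ^ 2 / 12 * (∫ t in a..a + h, secondDerivOfSq g t) +
        ∫ t in a..a + h, (h ^ 2 / 12 * deriv g t ^ 2 + h ^ 2 / 6 * |g t * deriv (deriv g) t|) := by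
  have := hg.continuous; have := hg.continuous_deriv one_le_two; have := hg.continuous_deriv_deriv
  have := hg.continuous_secondDerivOfSq; have := continuous_trapezoidKernel a (a + h)
  have hid := integral_add_trapezoidKernel_mul_eq (a := a) (b := a + h)
    (fun t _ => hg.hasDerivAt_sq t) (fun t _ => hg.hasDerivAt_two_mul_mul_deriv t)
    hg.continuous_secondDerivOfSq.continuousOn
  calc h / 2 * (g a ^ 2 + g (a + h) ^ 2)
      = ∫ t in a..a + h, (g t ^ 2 + trapezoidKernel a (a + h) t * secondDerivOfSq g t) := by
        rw [hid]; ring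
    _ = (∫ t in a..a + h, g t ^ 2) + h ^ 2 / 12 * (∫ t in a..a + h, secondDerivOfSq g t) +
          ∫ t in a..a + h, (trapezoidKernel a (a + h) t - h ^ 2 / 12) * secondDerivOfSq g t := by
        rw [← intervalIntegral.integral_const_mul, ← intervalIntegral.integral_add,
          ← intervalIntegral.integral_add]
        · congr 1; ext t; ring
        all_goals exact Continuous.intervalIntegrable (by fun_prop) _ _
    _ ≤ _ := by
        gcongr
        refine intervalIntegral.integral_mono_on (by linarith) ?_ ?_ fun t ht => ?_
        · exact Continuous.intervalIntegrable (by fun_prop) _ _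
        · exact Continuous.intervalIntegrable (by fun_prop) _ _
        · have hK := trapezoidKernel_le a (a + h) t
          rw [add_sub_cancel_left] at hK
          exact shifted_kernel_mul_le (trapezoidKernel_nonneg ht.1 ht.2) hK

end ContDiffTwo

theorem stmt_16 (Δx X₀ : ℝ) (hΔx : 0 < Δx) (g : ℝ → ℝ)
    (hg : ContDiff ℝ 2 g)
    (hg0 : Integrable (fun x => g x ^ 2)) (hg1 : Integrable (fun x => deriv g x ^ 2))
    (hg2 : Integrable (fun x => deriv (deriv g) x ^ 2)) :
    (∑' i : ℤ, g (X₀ + (i : ℝ) * Δx) ^ 2) * Δx ≤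
      (∫ x, g x ^ 2) + Δx ^ 2 / 6 *
        ((∫ x, deriv g x ^ 2) +
          Real.sqrt (∫ x, g x ^ 2) * Real.sqrt (∫ x, deriv (deriv g) x ^ 2)) := by
  have Hg := (memLp_two_iff_integrable_sq hg.continuous.aestronglyMeasurable).2 hg0
  have Hg' := (memLp_two_iff_integrable_sq
    (hg.continuous_deriv one_le_two).aestronglyMeasurable).2 hg1
  have Hg'' := (memLp_two_iff_integrable_sq
    hg.continuous_deriv_deriv.aestronglyMeasurable).2 hg2
  have hgg'' : Integrable (fun t => |g t * deriv (deriv g) t|) := (Hg.integrable_mul Hg'').abs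
  have hw : Integrable fun t =>
      Δx ^ 2 / 12 * deriv g t ^ 2 + Δx ^ 2 / 6 * |g t * deriv (deriv g) t| :=
    (hg1.const_mul _).add (hgg''.const_mul _)
  have hcells := ((hasSum_intervalIntegral_grid hg0 hΔx X₀).add
    ((hasSum_intervalIntegral_grid (integrable_secondDerivOfSq Hg Hg' Hg'') hΔx X₀).mul_left
      (Δx ^ 2 / 12))).add (hasSum_intervalIntegral_grid hw hΔx X₀)
  have hsum := tsum_mul_le_of_trapezoid_le (u := fun i : ℤ => g (X₀ + i * Δx) ^ 2) hΔx
    (fun i => sq_nonneg _) hcells fun i => by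
      simpa only [Int.cast_add, Int.cast_one, add_mul, one_mul, ← add_assoc] using
        trapezoid_sq_le hg (X₀ + i * Δx) hΔx.le
  rw [integral_secondDerivOfSq_eq_zero hg Hg Hg' Hg'', integral_add (hg1.const_mul _)
    (hgg''.const_mul _), integral_const_mul, integral_const_mul] at hsum
  have hcs := integral_abs_mul_le_sqrt_mul_sqrt Hg Hg''
  have hg1_nonneg : 0 ≤ ∫ t, deriv g t ^ 2 := integral_nonneg fun t => sq_nonneg _
  linarith [mul_le_mul_of_nonneg_left hcs (by positivity : (0 : ℝ) ≤ Δx ^ 2 / 6),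
    mul_nonneg (sq_nonneg Δx) hg1_nonneg]
end

section
/- Let h > 0, Δx > 0, let α, β ∈ ℝ with β ≥ 0, and let ν̃ : ℝ → [0,∞) be such that S := Σ_{l∈ℤ} ν̃(lΔx)Δx < ∞. Define linear operators A and B on l₂(ℤ) by (Av)_i = (α−β)v_{i−1} + (1+2β)v_i − (α+β)v_{i+1} and (Bv)_i = v_i + hΔx Σ_{l∈ℤ} ν̃(lΔx)(v_{i+l} − v_i). Then A is a bounded bijection of l₂(ℤ) whose inverse satisfies |A^{−1}|₂ ≤ 1, and |B|₂ ≤ 1 + 2Sh. -/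
/-!
In terms of the unit shifts `S±`, `(S± v)ᵢ = v_{i±1}`, the operator `A` is
`I + β (2I - S₋ - S₊) + α (S₋ - S₊)`. Since `S₋` is the adjoint of the isometry `S₊`,
`⟪A v, v⟫ = ‖v‖² + 2β (‖v‖² - ⟪S₊ v, v⟫) ≥ ‖v‖²`; by Lax–Milgram `A` is invertible, and the
coercivity bound `‖v‖ ≤ ‖A v‖` gives `‖A⁻¹‖ ≤ 1`. The operator `B` is
`I + hΔx ∑ₗ ν̃(lΔx) (S_l - I)`, an absolutely convergent series of operators with
`‖S_l - I‖ ≤ 2`, whence `‖B‖ ≤ 1 + 2Sh`.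
-/

open scoped ENNReal RealInnerProductSpace

noncomputable section

theorem Memℓp.comp_equiv {ι κ E : Type*} [NormedAddCommGroup E] {p : ℝ≥0∞} {f : κ → E}
    (hf : Memℓp f p) (e : ι ≃ κ) : Memℓp (f ∘ e) p := by
  rcases p.trichotomy with rfl | rfl | hp
  · exact memℓp_zero_iff.2 <| (memℓp_zero_iff.1 hf).preimage_embedding e.toEmbedding
  · rw [memℓp_infty_iff] at hf ⊢
    rwa [← e.surjective.range_comp] at hf
  · rw [memℓp_gen_iff hp] at hf ⊢
    exact e.summable_iff.2 hf

section Coercive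

variable {V : Type*} [NormedAddCommGroup V] [InnerProductSpace ℝ V] {A : V →L[ℝ] V} {c : ℝ}

theorem mul_norm_le_norm_apply_of_coercive (hA : ∀ v, c * ‖v‖ * ‖v‖ ≤ ⟪A v, v⟫) (v : V) :
    c * ‖v‖ ≤ ‖A v‖ := by
  rcases eq_or_ne v 0 with rfl | hv
  · simp
  · exact le_of_mul_le_mul_right ((hA v).trans (real_inner_le_norm _ _)) (norm_pos_iff.2 hv)

theorem exists_continuousLinearEquiv_of_coercive [CompleteSpace V] (hc : 0 < c)
    (hA : ∀ v, c * ‖v‖ * ‖v‖ ≤ ⟪A v, v⟫) :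
    ∃ e : V ≃L[ℝ] V, ⇑e = A ∧ ‖(e.symm : V →L[ℝ] V)‖ ≤ c⁻¹ := by
  have coercive : IsCoercive ((innerSL ℝ).comp A) := ⟨c, hc, hA⟩
  set e := coercive.continuousLinearEquivOfBilin
  have he : ⇑e = A := funext fun v =>
    (coercive.unique_continuousLinearEquivOfBilin fun _ => rfl).symm
  refine ⟨e, he, ContinuousLinearMap.opNorm_le_bound _ (inv_nonneg.2 hc.le) fun w => ?_⟩
  rw [le_inv_mul_iff₀ hc, ContinuousLinearEquiv.coe_coe]
  simpa [← he] using mul_norm_le_norm_apply_of_coercive hA (e.symm w)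

end Coercive

namespace lp

section Shift

variable {ι κ E 𝕜 : Type*} [NormedAddCommGroup E] [NormedRing 𝕜] [Module 𝕜 E]
  [IsBoundedSMul 𝕜 E] {p : ℝ≥0∞} [Fact (1 ≤ p)]

@[simp]
theorem evalCLM_apply (i : ι) (v : lp (fun _ : ι => E) p) :
    evalCLM 𝕜 (fun _ : ι => E) p i v = v i := rfl

def compEquiv (e : ι ≃ κ) : lp (fun _ : κ => E) p →ₗᵢ[𝕜] lp (fun _ : ι => E) p where
  toFun v := ⟨v ∘ e, (lp.memℓp v).comp_equiv e⟩
  map_add' _ _ := rfl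
  map_smul' _ _ := rfl
  norm_map' v := by
    rcases p.dichotomy with rfl | hp
    · exact e.surjective.iSup_comp fun i => ‖v i‖
    · rw [norm_eq_tsum_rpow (zero_lt_one.trans_le hp), norm_eq_tsum_rpow (zero_lt_one.trans_le hp)]
      exact congrArg (· ^ _) (e.tsum_eq fun i => ‖v i‖ ^ p.toReal)

variable {G : Type*} [AddGroup G]

variable (𝕜) in
def shift (k : G) : lp (fun _ : G => E) p →ₗᵢ[𝕜] lp (fun _ : G => E) p :=
  compEquiv (Equiv.addRight k)

@[simp]
theorem shift_apply (k : G) (v : lp (fun _ : G => E) p) (i : G) :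
    shift 𝕜 k v i = v (i + k) := rfl

theorem shift_shift_neg (k : G) (v : lp (fun _ : G => E) p) : shift 𝕜 k (shift 𝕜 (-k) v) = v :=
  lp.ext <| funext fun i => by simp

end Shift

variable {E : Type*} [NormedAddCommGroup E]

section Tridiagonal

def tridiagonal [NormedSpace ℝ E] {p : ℝ≥0∞} [Fact (1 ≤ p)] (a b c : ℝ) :
    lp (fun _ : ℤ => E) p →L[ℝ] lp (fun _ : ℤ => E) p :=
  a • (shift ℝ (-1)).toContinuousLinearMap + b • 1 + c • (shift ℝ 1).toContinuousLinearMap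

theorem tridiagonal_apply [NormedSpace ℝ E] {p : ℝ≥0∞} [Fact (1 ≤ p)] (a b c : ℝ)
    (v : lp (fun _ : ℤ => E) p) (i : ℤ) :
    tridiagonal a b c v i = a • v (i - 1) + b • v i + c • v (i + 1) := rfl

variable [InnerProductSpace ℝ E]

theorem inner_shift_neg_self {G : Type*} [AddGroup G] (k : G) (v : lp (fun _ : G => E) 2) :
    ⟪shift ℝ (-k) v, v⟫ = ⟪shift ℝ k v, v⟫ := by
  rw [← (shift ℝ k).inner_map_map, shift_shift_neg, real_inner_comm]

theorem le_inner_tridiagonal_self (a b c : ℝ) (v : lp (fun _ : ℤ => E) 2) :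
    (b - |a + c|) * ‖v‖ * ‖v‖ ≤ ⟪tridiagonal a b c v, v⟫ := by
  have hshift : |⟪shift ℝ 1 v, v⟫| ≤ ‖v‖ * ‖v‖ := by
    simpa using abs_real_inner_le_norm (shift ℝ 1 v) v
  have hinner : ⟪tridiagonal a b c v, v⟫ = b * (‖v‖ * ‖v‖) + (a + c) * ⟪shift ℝ 1 v, v⟫ := by
    simp only [tridiagonal, add_apply, smul_apply, LinearIsometry.coe_toContinuousLinearMap,
      one_apply_eq_self, inner_add_left, real_inner_smul_left, inner_shift_neg_self,
      real_inner_self_eq_norm_mul_norm]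
    ring
  rw [hinner]
  nlinarith [abs_mul (a + c) ⟪shift ℝ 1 v, v⟫, neg_abs_le ((a + c) * ⟪shift ℝ 1 v, v⟫),
    mul_le_mul_of_nonneg_left hshift (abs_nonneg (a + c))]

end Tridiagonal

section Jump

variable [NormedSpace ℝ E] {p : ℝ≥0∞} [Fact (1 ≤ p)] {G : Type*} [AddGroup G]

def jumpOperator (w : G → ℝ) : lp (fun _ : G => E) p →L[ℝ] lp (fun _ : G => E) p :=
  ∑' l, w l • ((shift ℝ l).toContinuousLinearMap - 1)

theorem norm_shift_sub_one_le (k : G) :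
    ‖(shift ℝ k : lp (fun _ : G => E) p →ₗᵢ[ℝ] _).toContinuousLinearMap - 1‖ ≤ 2 := by
  have hone : ‖(1 : lp (fun _ : G => E) p →L[ℝ] _)‖ ≤ 1 := ContinuousLinearMap.norm_id_le
  linarith [norm_sub_le (shift ℝ k : lp (fun _ : G => E) p →ₗᵢ[ℝ] _).toContinuousLinearMap 1,
    (shift ℝ k : lp (fun _ : G => E) p →ₗᵢ[ℝ] _).norm_toContinuousLinearMap_le]

theorem norm_smul_shift_sub_one_le (w : G → ℝ) (l : G) :
    ‖w l • ((shift ℝ l : lp (fun _ : G => E) p →ₗᵢ[ℝ] _).toContinuousLinearMap - 1)‖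
      ≤ 2 * |w l| := by
  rw [norm_smul, Real.norm_eq_abs, mul_comm]
  exact mul_le_mul_of_nonneg_right (norm_shift_sub_one_le l) (abs_nonneg _)

variable {w : G → ℝ}

theorem norm_jumpOperator_le (hw : Summable w) :
    ‖(jumpOperator w : lp (fun _ : G => E) p →L[ℝ] _)‖ ≤ 2 * ∑' l, |w l| :=
  tsum_of_norm_bounded (hw.abs.hasSum.mul_left 2) (norm_smul_shift_sub_one_le w)

variable [CompleteSpace E]

theorem summable_smul_shift_sub_one (hw : Summable w) :
    Summable fun l =>
      w l • ((shift ℝ l : lp (fun _ : G => E) p →ₗᵢ[ℝ] _).toContinuousLinearMap - 1) :=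
  .of_norm_bounded (hw.abs.mul_left 2) (norm_smul_shift_sub_one_le w)

theorem jumpOperator_apply (hw : Summable w) (v : lp (fun _ : G => E) p) (i : G) :
    jumpOperator w v i = ∑' l, w l • (v (i + l) - v i) := by
  have := ((evalCLM ℝ (fun _ : G => E) p i).comp (ContinuousLinearMap.apply ℝ _ v)).map_tsum
    (summable_smul_shift_sub_one (E := E) (p := p) hw)
  simpa [jumpOperator] using this

end Jump

end lp

theorem stmt_18 (h Δx α β : ℝ) (hh : 0 < h) (hΔx : 0 < Δx) (hβ : 0 ≤ β)
    (ν : ℝ → ℝ) (hν : ∀ x, 0 ≤ ν x)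
    (hsum : Summable fun l : ℤ => ν ((l : ℝ) * Δx)) :
    ∃ A Ainv B : lp (fun _ : ℤ => ℝ) 2 →L[ℝ] lp (fun _ : ℤ => ℝ) 2,
      (∀ (v : lp (fun _ : ℤ => ℝ) 2) (i : ℤ),
        A v i = (α - β) * v (i - 1) + (1 + 2 * β) * v i - (α + β) * v (i + 1)) ∧
      (∀ v, Ainv (A v) = v) ∧ (∀ v, A (Ainv v) = v) ∧ ‖Ainv‖ ≤ 1 ∧
      (∀ (v : lp (fun _ : ℤ => ℝ) 2) (i : ℤ),
        B v i = v i + h * Δx * ∑' l : ℤ, ν ((l : ℝ) * Δx) * (v (i + l) - v i)) ∧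
      ‖B‖ ≤ 1 + 2 * ((∑' l : ℤ, ν ((l : ℝ) * Δx)) * Δx) * h := by
  set A : lp (fun _ : ℤ => ℝ) 2 →L[ℝ] _ := lp.tridiagonal (α - β) (1 + 2 * β) (-(α + β))
  have hcoercive : ∀ v, 1 * ‖v‖ * ‖v‖ ≤ ⟪A v, v⟫ := by
    intro v
    convert lp.le_inner_tridiagonal_self (α - β) (1 + 2 * β) (-(α + β)) v using 3
    rw [show α - β + -(α + β) = -(2 * β) by ring, abs_neg, abs_of_nonneg (by positivity)]
    ring
  obtain ⟨e, he, he_symm⟩ := exists_continuousLinearEquiv_of_coercive one_pos hcoercive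
  set J : lp (fun _ : ℤ => ℝ) 2 →L[ℝ] _ := lp.jumpOperator fun l => ν ((l : ℝ) * Δx)
  refine ⟨A, e.symm, 1 + (h * Δx) • J, fun v i => ?_, fun v => by simp [← he],
    fun v => by simp [← he], by simpa using he_symm, fun v i => ?_, ?_⟩
  · simp only [A, lp.tridiagonal_apply, smul_eq_mul]
    ring
  · change v i + (h * Δx) * J v i = _
    simp only [J, lp.jumpOperator_apply hsum, smul_eq_mul]
  · calc ‖1 + (h * Δx) • J‖ ≤ 1 + h * Δx * (2 * ∑' l : ℤ, |ν ((l : ℝ) * Δx)|) := by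
          refine (norm_add_le _ _).trans (add_le_add ContinuousLinearMap.norm_id_le ?_)
          rw [norm_smul, Real.norm_of_nonneg (by positivity)]
          exact mul_le_mul_of_nonneg_left (lp.norm_jumpOperator_le hsum) (by positivity)
      _ = _ := by simp only [abs_of_nonneg (hν _)]; ring

end
end
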